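/- arXiv:2205.09012 — 9 statements merged into one kernel-verified Lean document; each statement's English description precedes it below -/
import Mathlib

section
/- Every Eulerian (connected, all degrees even) multigraph G with a distinguished vertex z has a spanning subgraph H such that d_H(v) = d_G(v)/2 for every vertex v ≠ z, and d_H(z) ∈ {d_G(z)/2, d_G(z)/2 + 1}. -/
namespace MG

variable {V E : Type} [Fintype V] [Fintype E] [DecidableEq V] [DecidableEq E]

/-- Degree of `v` in the spanning subgraph with edge set `S`; loops count twice. -/
def deg (ends : E → V × V) (S : Finset E) (v : V) : ℕ :=
  (S.filter fun e => (ends e).1 = v).card + (S.filter fun e => (ends e).2 = v).card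

/-- Edges of `S` with exactly one end in `A`. -/
def cut (ends : E → V × V) (S : Finset E) (A : Finset V) : Finset E :=
  S.filter fun e => ¬ (((ends e).1 ∈ A) ↔ ((ends e).2 ∈ A))

/-- Edges of `S` with both ends in `A`. -/
def inside (ends : E → V × V) (S : Finset E) (A : Finset V) : Finset E :=
  S.filter fun e => (ends e).1 ∈ A ∧ (ends e).2 ∈ A

/-- `m`-edge-connected: every edge cut has at least `m` edges. -/
def EdgeConn (ends : E → V × V) (m : ℕ) : Prop :=
  ∀ A : Finset V, A.Nonempty → A ≠ Finset.univ → m ≤ (cut ends Finset.univ A).card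

/-- Essentially `lam`-edge-connected: every edge cut of size `< lam` has all its
edges incident with one common vertex. -/
def EssEdgeConn (ends : E → V × V) (lam : ℕ) : Prop :=
  ∀ A : Finset V, A.Nonempty → A ≠ Finset.univ →
    (cut ends Finset.univ A).card < lam →
      ∃ v : V, ∀ e ∈ cut ends Finset.univ A, (ends e).1 = v ∨ (ends e).2 = v

/-- The edge set `S` induces a bipartite graph. -/
def BipOn (ends : E → V × V) (S : Finset E) : Prop :=
  ∃ X : Finset V, ∀ e ∈ S, ¬ (((ends e).1 ∈ X) ↔ ((ends e).2 ∈ X))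

/-- Edges of `S` not crossing the bipartition `(X, Xᶜ)`. -/
def bad (ends : E → V × V) (S : Finset E) (X : Finset V) : Finset E :=
  S.filter fun e => (((ends e).1 ∈ X) ↔ ((ends e).2 ∈ X))

/-- The bipartite index: fewest edge deletions making the graph `(V, S)` bipartite. -/
def biIndexOn (ends : E → V × V) (S : Finset E) : ℕ :=
  Finset.univ.inf' Finset.univ_nonempty fun X : Finset V => (bad ends S X).card

/-- Adjacency via an edge of `S`. -/
def adjOn (ends : E → V × V) (S : Finset E) (a b : V) : Prop :=
  ∃ e ∈ S, ends e = (a, b) ∨ ends e = (b, a)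

/-- The spanning subgraph with edge set `S` is connected. -/
def ConnOn (ends : E → V × V) (S : Finset E) : Prop :=
  ∀ a b : V, Relation.ReflTransGen (adjOn ends S) a b

/-- `T` is the edge set of a spanning tree. -/
def IsSpTree (ends : E → V × V) (T : Finset E) : Prop :=
  ConnOn ends T ∧ T.card + 1 = Fintype.card V

/-- `m`-tree-connected inside `S`: `m` pairwise edge-disjoint spanning trees using edges of `S`. -/
def TreeConnOn (ends : E → V × V) (m : ℕ) (S : Finset E) : Prop :=
  ∃ T : Fin m → Finset E, (∀ i, T i ⊆ S ∧ IsSpTree ends (T i)) ∧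
    ∀ i j, i ≠ j → Disjoint (T i) (T j)

/-- `C` is the edge set of an odd cycle: odd, nonempty, 2-regular on its support and
connected on its support. -/
def IsOddCycle (ends : E → V × V) (C : Finset E) : Prop :=
  C.Nonempty ∧ Odd C.card ∧ (∀ v : V, deg ends C v = 0 ∨ deg ends C v = 2) ∧
    ∀ a b : V, 0 < deg ends C a → 0 < deg ends C b →
      Relation.ReflTransGen (adjOn ends C) a b

/-- `f` is compatible with the graph with respect to the bipartition `(X, Xᶜ)`. -/
def CompatAt (ends : E → V × V) {k : ℕ} (f : V → ZMod k) (X : Finset V) : Prop :=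
  (∃ x : ℕ, x ≤ (inside ends Finset.univ X).card ∧
    (∑ v ∈ X, f v) - ((2 * x : ℕ) : ZMod k) = ∑ v ∈ Xᶜ, f v) ∨
  (∃ y : ℕ, y ≤ (inside ends Finset.univ Xᶜ).card ∧
    (∑ v ∈ X, f v) = (∑ v ∈ Xᶜ, f v) - ((2 * y : ℕ) : ZMod k))

end MG

open MG Finset

/-!
Let `l` be an Euler circuit based at `z` and let `H` consist of its 1st, 3rd, 5th, ... edges.
Each passage of the circuit through a vertex uses two consecutive edges, exactly one of which
lies in `H`, so `H` takes half of the degree at every vertex except possibly `z`: when the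
circuit has odd length, its first and last edges both lie in `H` and `z` gets one extra edge.

The Euler circuit is a longest trail. Every edge at the start of a longest trail already lies
on it, so by parity the trail is closed; rotating it to begin at any vertex it visits shows that
it contains every edge at that vertex, and connectivity then forces it to contain all edges.
-/

namespace List

variable {α : Type*}

def everyOther : List α → List α
  | [] => []
  | [a] => [a]
  | a :: _ :: l => a :: everyOther l

lemma everyOther_cons (a : α) (l : List α) : everyOther (a :: l) = a :: everyOther l.tail := by
  cases l <;> rfl

lemma everyOther_sublist : ∀ l : List α, everyOther l <+ l
  | [] => Sublist.slnil
  | [_] => Sublist.refl _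
  | a :: b :: l => ((everyOther_sublist l).cons b).cons_cons a

end List

namespace MG

variable {V E : Type}

inductive IsWalk (ends : E → V × V) : V → V → List E → Prop
  | nil (v : V) : IsWalk ends v v []
  | cons {a b c : V} {e : E} {l : List E} :
      (ends e = (a, b) ∨ ends e = (b, a)) → IsWalk ends b c l → IsWalk ends a c (e :: l)

lemma exists_joins_of_incident {ends : E → V × V} {e : E} {w : V}
    (h : (ends e).1 = w ∨ (ends e).2 = w) : ∃ u, ends e = (u, w) ∨ ends e = (w, u) := by
  rcases h with rfl | rfl
  · exact ⟨(ends e).2, Or.inr rfl⟩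
  · exact ⟨(ends e).1, Or.inl rfl⟩

namespace IsWalk

variable {ends : E → V × V}

lemma append {a b c : V} {l₁ l₂ : List E} (h₁ : IsWalk ends a b l₁) (h₂ : IsWalk ends b c l₂) :
    IsWalk ends a c (l₁ ++ l₂) := by
  induction h₁ with
  | nil => exact h₂
  | cons hj _ ih => exact cons hj (ih h₂)

lemma exists_eq_append_of_mem {a c w : V} {l : List E} {e : E} (h : IsWalk ends a c l)
    (he : e ∈ l) (hw : (ends e).1 = w ∨ (ends e).2 = w) :
    ∃ l₁ l₂, l = l₁ ++ l₂ ∧ IsWalk ends a w l₁ ∧ IsWalk ends w c l₂ := by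
  induction h with
  | nil => simp at he
  | @cons a b c e' l hj ht ih =>
    rcases List.mem_cons.mp he with rfl | he
    · have hab : w = a ∨ w = b := by
        rcases hj with h | h <;> rw [h] at hw <;> rcases hw with rfl | rfl <;> simp
      rcases hab with rfl | rfl
      · exact ⟨[], e :: l, rfl, nil w, cons hj ht⟩
      · exact ⟨[e], l, rfl, cons hj (nil w), ht⟩
    · obtain ⟨l₁, l₂, rfl, h₁, h₂⟩ := ih he
      exact ⟨e' :: l₁, l₂, rfl, cons hj h₁, h₂⟩

lemma exists_rotate {a w : V} {l : List E} {e : E} (h : IsWalk ends a a l) (he : e ∈ l)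
    (hw : (ends e).1 = w ∨ (ends e).2 = w) : ∃ l', IsWalk ends w w l' ∧ l'.Perm l := by
  obtain ⟨l₁, l₂, rfl, h₁, h₂⟩ := h.exists_eq_append_of_mem he hw
  exact ⟨l₂ ++ l₁, h₂.append h₁, List.perm_append_comm⟩

end IsWalk

structure IsLongestTrail (ends : E → V × V) (a c : V) (l : List E) : Prop where
  isWalk : IsWalk ends a c l
  nodup : l.Nodup
  length_le : ∀ a' c' l', IsWalk ends a' c' l' → l'.Nodup → l'.length ≤ l.length

lemma exists_isLongestTrail [Fintype E] [Nonempty V] (ends : E → V × V) :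
    ∃ a c l, IsLongestTrail ends a c l := by
  set S : Set ℕ := {n | ∃ a c l, IsWalk ends a c l ∧ l.Nodup ∧ l.length = n}
  have hne : S.Nonempty :=
    ⟨0, Classical.arbitrary V, _, [], IsWalk.nil _, List.nodup_nil, rfl⟩
  have hbdd : BddAbove S := ⟨Fintype.card E, by
    rintro _ ⟨a, c, l, -, hl, rfl⟩
    exact hl.length_le_card⟩
  obtain ⟨a, c, l, hw, hl, hlen⟩ := Nat.sSup_mem hne hbdd
  exact ⟨a, c, l, ⟨hw, hl, fun a' c' l' hw' hl' =>
    hlen ▸ le_csSup hbdd ⟨a', c', l', hw', hl', rfl⟩⟩⟩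

namespace IsLongestTrail

variable {ends : E → V × V} {a c : V} {l : List E}

lemma mem_of_incident_start (h : IsLongestTrail ends a c l) {e : E}
    (he : (ends e).1 = a ∨ (ends e).2 = a) : e ∈ l := by
  by_contra hel
  obtain ⟨u, hj⟩ := exists_joins_of_incident he
  have := h.length_le u c (e :: l) (h.isWalk.cons hj) (List.nodup_cons.mpr ⟨hel, h.nodup⟩)
  simp at this

lemma exists_rotate (h : IsLongestTrail ends a a l) {e : E} (he : e ∈ l) {w : V}
    (hw : (ends e).1 = w ∨ (ends e).2 = w) : ∃ l', IsLongestTrail ends w w l' ∧ l'.Perm l := by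
  obtain ⟨l', hw', hperm⟩ := h.isWalk.exists_rotate he hw
  exact ⟨l', ⟨hw', hperm.nodup_iff.mpr h.nodup, hperm.length_eq ▸ h.length_le⟩, hperm⟩

lemma mem_of_incident (h : IsLongestTrail ends a a l) {w : V}
    (hw : w = a ∨ ∃ e ∈ l, (ends e).1 = w ∨ (ends e).2 = w) {f : E}
    (hf : (ends f).1 = w ∨ (ends f).2 = w) : f ∈ l := by
  rcases hw with rfl | ⟨e, he, hew⟩
  · exact h.mem_of_incident_start hf
  · obtain ⟨l', hl', hperm⟩ := h.exists_rotate he hew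
    exact hperm.mem_iff.mp (hl'.mem_of_incident_start hf)

end IsLongestTrail

variable [DecidableEq V]

def inc (ends : E → V × V) (e : E) (v : V) : ℕ :=
  (if (ends e).1 = v then 1 else 0) + (if (ends e).2 = v then 1 else 0)

lemma deg_eq_sum_inc (ends : E → V × V) (S : Finset E) (v : V) :
    deg ends S v = ∑ e ∈ S, inc ends e v := by
  simp only [deg, inc, Finset.card_filter, Finset.sum_add_distrib]

lemma inc_of_joins {ends : E → V × V} {e : E} {a b : V}
    (h : ends e = (a, b) ∨ ends e = (b, a)) (v : V) :
    inc ends e v = (if a = v then 1 else 0) + (if b = v then 1 else 0) := by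
  rcases h with h | h <;> simp only [inc, h]
  omega

lemma inc_eq_zero_of_not_incident {ends : E → V × V} {e : E} {v : V}
    (h : ¬ ((ends e).1 = v ∨ (ends e).2 = v)) : inc ends e v = 0 := by
  simp_all [inc]

lemma deg_toFinset_eq_sum_inc [DecidableEq E] (ends : E → V × V) {l : List E} (hl : l.Nodup)
    (v : V) : deg ends l.toFinset v = (l.map (inc ends · v)).sum := by
  rw [deg_eq_sum_inc, List.sum_toFinset _ hl]

lemma deg_univ_eq_sum_inc_of_incident_mem [Fintype E] [DecidableEq E] {ends : E → V × V}
    {l : List E} (hl : l.Nodup) {v : V} (hv : ∀ e, (ends e).1 = v ∨ (ends e).2 = v → e ∈ l) :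
    deg ends Finset.univ v = (l.map (inc ends · v)).sum := by
  rw [deg_eq_sum_inc, ← List.sum_toFinset _ hl]
  refine (Finset.sum_subset (Finset.subset_univ _) fun e _ he => ?_).symm
  exact inc_eq_zero_of_not_incident fun h => he (List.mem_toFinset.mpr (hv e h))

namespace IsWalk

variable {ends : E → V × V}

lemma even_sum_inc {a c : V} {l : List E} (h : IsWalk ends a c l) (v : V) :
    Even ((l.map (inc ends · v)).sum + (if a = v then 1 else 0) + (if c = v then 1 else 0)) := by
  induction h with
  | nil w => split_ifs <;> simp
  | @cons a b c e l hj _ ih =>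
    obtain ⟨r, hr⟩ := ih
    refine ⟨r + if a = v then 1 else 0, ?_⟩
    rw [List.map_cons, List.sum_cons, inc_of_joins hj]
    omega

lemma two_mul_sum_inc_everyOther {a c : V} {l : List E} (h : IsWalk ends a c l) (v : V) :
    2 * ((l.everyOther.map (inc ends · v)).sum : ℤ) = (l.map (inc ends · v)).sum +
        (if a = v then 1 else 0) - (-1) ^ l.length * (if c = v then 1 else 0) ∧
    2 * ((l.tail.everyOther.map (inc ends · v)).sum : ℤ) = (l.map (inc ends · v)).sum -
        (if a = v then 1 else 0) + (-1) ^ l.length * (if c = v then 1 else 0) := by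
  induction h with
  | nil w => simp [List.everyOther]
  | @cons a b c e l hj _ ih =>
    simp only [List.everyOther_cons, List.tail_cons, List.map_cons, List.sum_cons,
      inc_of_joins hj, List.length_cons, pow_succ] at ih ⊢
    push_cast at ih ⊢
    constructor <;> linarith [ih.1, ih.2]

lemma two_mul_sum_inc_everyOther_of_closed {z : V} {l : List E} (h : IsWalk ends z z l)
    (v : V) : 2 * (l.everyOther.map (inc ends · v)).sum =
      (l.map (inc ends · v)).sum + if v = z ∧ Odd l.length then 2 else 0 := by
  have key := (h.two_mul_sum_inc_everyOther v).1
  simp only [eq_comm (a := z)] at key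
  rcases Nat.even_or_odd l.length with hl | hl
  · rw [hl.neg_one_pow] at key
    simp only [Nat.not_odd_iff_even.mpr hl, and_false, if_false]
    split_ifs at key <;> omega
  · rw [hl.neg_one_pow] at key
    simp only [hl, and_true]
    split_ifs at key ⊢ <;> omega

end IsWalk

lemma IsLongestTrail.eq_of_even_deg [Fintype E] [DecidableEq E] {ends : E → V × V} {a c : V}
    {l : List E} (h : IsLongestTrail ends a c l)
    (heven : ∀ v, Even (deg ends Finset.univ v)) : c = a := by
  have hpar := h.isWalk.even_sum_inc a
  rw [← deg_univ_eq_sum_inc_of_incident_mem h.nodup fun e => h.mem_of_incident_start,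
    if_pos rfl] at hpar
  by_contra hca
  rw [if_neg hca, add_zero, Nat.even_add_one] at hpar
  exact hpar (heven a)

lemma exists_euler_circuit [Fintype E] [DecidableEq E] {ends : E → V × V}
    (hconn : ConnOn ends Finset.univ) (heven : ∀ v, Even (deg ends Finset.univ v)) (z : V) :
    ∃ l, IsWalk ends z z l ∧ l.Nodup ∧ ∀ e, e ∈ l := by
  have : Nonempty V := ⟨z⟩
  obtain ⟨a, c, l, hl⟩ := exists_isLongestTrail ends
  obtain rfl := hl.eq_of_even_deg heven
  have hvisited : ∀ w, w = c ∨ ∃ e ∈ l, (ends e).1 = w ∨ (ends e).2 = w := by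
    intro w
    induction hconn c w with
    | refl => exact Or.inl rfl
    | tail _ hadj ih =>
      obtain ⟨e, -, hj⟩ := hadj
      refine Or.inr ⟨e, hl.mem_of_incident ih ?_, ?_⟩ <;> rcases hj with h | h <;> simp [h]
  have hall : ∀ e, e ∈ l := fun e => hl.mem_of_incident (hvisited (ends e).1) (Or.inl rfl)
  rcases hvisited z with rfl | ⟨e, he, hez⟩
  · exact ⟨l, hl.isWalk, hl.nodup, hall⟩
  · obtain ⟨l', hl', hperm⟩ := hl.exists_rotate he hez
    exact ⟨l', hl'.isWalk, hl'.nodup, fun e => hperm.mem_iff.mpr (hall e)⟩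

end MG

theorem stmt1_general {V E : Type} [Fintype E] [DecidableEq V] [DecidableEq E]
    (ends : E → V × V) (z : V)
    (hconn : ConnOn ends Finset.univ)
    (heven : ∀ v : V, Even (deg ends Finset.univ v)) :
    ∃ H : Finset E,
      (∀ v : V, v ≠ z → deg ends H v = deg ends Finset.univ v / 2) ∧
      (deg ends H z = deg ends Finset.univ z / 2 ∨
        deg ends H z = deg ends Finset.univ z / 2 + 1) := by
  obtain ⟨l, hwalk, hnodup, hall⟩ := exists_euler_circuit hconn heven z
  have hG (v : V) : deg ends Finset.univ v = (l.map (inc ends · v)).sum :=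
    deg_univ_eq_sum_inc_of_incident_mem hnodup fun e _ => hall e
  have hH (v : V) := deg_toFinset_eq_sum_inc ends (hnodup.sublist l.everyOther_sublist) v
  refine ⟨l.everyOther.toFinset, fun v hv => ?_, ?_⟩
  · have key := hwalk.two_mul_sum_inc_everyOther_of_closed v
    rw [if_neg fun h => hv h.1] at key
    rw [hH, hG]
    omega
  · have key := hwalk.two_mul_sum_inc_everyOther_of_closed z
    rw [hH, hG]
    split_ifs at key <;> omega

theorem stmt1 {V E : Type} [Fintype V] [Fintype E] [DecidableEq V] [DecidableEq E]
    (ends : E → V × V) (z : V)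
    (hconn : ConnOn ends Finset.univ)
    (heven : ∀ v : V, Even (deg ends Finset.univ v)) :
    ∃ H : Finset E,
      (∀ v : V, v ≠ z → deg ends H v = deg ends Finset.univ v / 2) ∧
      (deg ends H z = deg ends Finset.univ z / 2 ∨
        deg ends H z = deg ends Finset.univ z / 2 + 1) :=
  stmt1_general ends z hconn heven
end

section
/- Every connected 2r-regular multigraph G such that (r+1)|V(G)| is even can be decomposed into two spanning subgraphs H1 and H2 (with E(H1) ∪ E(H2) = E(G), E(H1) ∩ E(H2) = ∅) such that every vertex degree in H1 and in H2 lies in the set {r−1, r+1}. -/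
open MG Finset

/-!
An Euler circuit of `G` passes through every edge once and visits each vertex `r` times.
Colour its edges in order, switching colour at every visit except one designated visit per
vertex. There are `(r - 1) |V|` switches, an even number by the parity hypothesis, so the
colouring closes up around the circuit. At a vertex every other visit contributes one edge of
each colour and the designated visit two edges of one colour, so each colour class has degree
`r - 1` or `r + 1` there.

The Euler circuit is a longest trail: its last vertex has all its edges on the trail, so by
parity the trail is closed, and by connectivity an unused edge would meet the closed trail at
some vertex, where the trail could be reopened and extended.
-/

theorem Cycle.Chain.rel_getElem_finRotate {α : Type*} {R : α → α → Prop} {L : List α}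
    (h : Cycle.Chain R L) (i : Fin L.length) : R L[i] L[finRotate _ i] := by
  cases L with
  | nil => exact i.elim0
  | cons a l =>
    rw [Cycle.chain_coe_cons, ← List.cons_append, List.isChain_iff_getElem] at h
    have hi := h i (by simpa using i.2)
    rw [List.getElem_append_left i.2] at hi
    rcases eq_or_ne i (Fin.last _) with rfl | hne
    · simpa [finRotate_last] using hi
    · have hrot : ((finRotate _ i : Fin (a :: l).length) : ℕ) = i + 1 :=
        coe_finRotate_of_ne_last hne
      have hlt : (i : ℕ) + 1 < (a :: l).length := by simpa using Fin.val_lt_last hne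
      rw [List.getElem_append_left hlt] at hi
      simpa only [Fin.getElem_fin, hrot] using hi

theorem Fin.exists_finRotate_sub_eq_of_sum_eq_zero {G : Type*} [AddCommGroup G] {m : ℕ}
    (f : Fin m → G) (hf : ∑ i, f i = 0) :
    ∃ c : Fin m → G, ∀ i, c (finRotate m i) - c i = f i := by
  cases m with
  | zero => exact ⟨0, fun i => i.elim0⟩
  | succ n =>
    refine ⟨fun i => Fin.partialSum f i.castSucc, fun i => ?_⟩
    induction i using Fin.lastCases with
    | last =>
      have htotal : Fin.partialSum f (Fin.last (n + 1)) = 0 := by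
        rw [← hf, Fin.partialSum, Fin.val_last, List.take_of_length_le (by simp), List.sum_ofFn]
      rw [← Fin.succ_last, Fin.partialSum_succ] at htotal
      simp [eq_neg_of_add_eq_zero_left htotal]
    | cast j =>
      dsimp only
      rw [finRotate_apply, Fin.coeSucc_eq_succ, ← Fin.succ_castSucc, Fin.partialSum_succ,
        add_sub_cancel_left]

theorem Finset.card_filter_ne_section {ι β : Type*} [Fintype ι] [Fintype β] [DecidableEq ι]
    [DecidableEq β] {g : ι → β} {t : β → ι} (ht : ∀ b, g (t b) = b) {r : ℕ}
    (hr : ∀ b, #{i | g i = b} = r) : #{i | t (g i) ≠ i} = (r - 1) * Fintype.card β := by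
  rw [card_eq_sum_card_fiberwise (f := g) (t := univ) fun _ _ => mem_univ _]
  have hfiber (b : β) : (({i | t (g i) ≠ i} : Finset ι).filter fun i => g i = b) =
      ({i | g i = b} : Finset ι).erase (t b) := by
    ext i
    simp only [mem_filter, mem_univ, true_and, mem_erase]
    constructor <;> rintro ⟨hi, rfl⟩ <;> exact ⟨Ne.symm hi, rfl⟩
  have hcard (b : β) : #(({i | g i = b} : Finset ι).erase (t b)) = r - 1 := by
    rw [card_erase_of_mem (mem_filter.2 ⟨mem_univ (t b), ht b⟩), hr]
  simp only [hfiber, hcard, sum_const, card_univ, smul_eq_mul, mul_comm]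

namespace MG

section Incidence

variable {V E : Type} [DecidableEq V] (ends : E → V × V)

def incidence (v : V) (e : E) : ℕ :=
  (if (ends e).1 = v then 1 else 0) + if (ends e).2 = v then 1 else 0

lemma deg_eq_sum_incidence (S : Finset E) (v : V) :
    deg ends S v = ∑ e ∈ S, incidence ends v e := by
  simp only [deg, incidence, card_filter, sum_add_distrib]

lemma deg_add_deg_compl [Fintype E] [DecidableEq E] (S : Finset E) (v : V) :
    deg ends S v + deg ends Sᶜ v = deg ends univ v := by
  simp only [deg_eq_sum_incidence, sum_add_sum_compl]

end Incidence

section Darts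

variable {V E : Type} (ends : E → V × V)

/-- The dart `(e, b)` runs along `e` from `(ends e).1` to `(ends e).2` if `b`, and backwards
otherwise. -/
def src (d : E × Bool) : V := if d.2 then (ends d.1).1 else (ends d.1).2

def tgt (d : E × Bool) : V := if d.2 then (ends d.1).2 else (ends d.1).1

def Follows (d d' : E × Bool) : Prop := tgt ends d = src ends d'

lemma ends_eq_src_tgt_or (d : E × Bool) :
    ends d.1 = (src ends d, tgt ends d) ∨ ends d.1 = (tgt ends d, src ends d) := by
  rcases d with ⟨e, _ | _⟩ <;> simp [src, tgt]

lemma incidence_fst [DecidableEq V] (d : E × Bool) (v : V) :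
    incidence ends v d.1 =
      (if src ends d = v then 1 else 0) + if tgt ends d = v then 1 else 0 := by
  rcases ends_eq_src_tgt_or ends d with h | h <;> simp only [incidence, h, add_comm]

lemma exists_src_eq {e : E} {v : V} (h : (ends e).1 = v ∨ (ends e).2 = v) :
    ∃ b, src ends (e, b) = v := by
  rcases h with h | h
  exacts [⟨true, h⟩, ⟨false, h⟩]

lemma src_head_cons_map_tgt {L : List (E × Bool)} (hL : L.IsChain (Follows ends))
    (hne : L ≠ []) :
    src ends (L.head hne) :: L.map (tgt ends) = L.map (src ends) ++ [tgt ends (L.getLast hne)] := by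
  induction L with
  | nil => exact absurd rfl hne
  | cons d L ih =>
    cases L with
    | nil => rfl
    | cons d' L =>
      obtain ⟨hdd', hL⟩ := List.isChain_cons_cons.mp hL
      simp only [List.head_cons, List.map_cons, List.getLast_cons_cons] at ih ⊢
      rw [hdd', ih hL (List.cons_ne_nil _ _)]
      rfl

end Darts

section Circuits

variable {V E : Type} (ends : E → V × V)

def IsEulerCircuit {m : ℕ} (edge : Fin m ≃ E) (vert : Fin m → V) : Prop :=
  ∀ i, ends (edge i) = (vert i, vert (finRotate m i)) ∨
    ends (edge i) = (vert (finRotate m i), vert i)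

variable {ends} in
/-- Each visit of the circuit to `v`, entered along `edge i` and left along `edge (i + 1)`,
contributes the number of those two edges lying in `S`. -/
lemma IsEulerCircuit.deg_eq [DecidableEq V] [DecidableEq E] {m : ℕ} {edge : Fin m ≃ E}
    {vert : Fin m → V} (hC : IsEulerCircuit ends edge vert) (S : Finset E) (v : V) :
    deg ends S v = ∑ i with vert (finRotate m i) = v,
      ((if edge i ∈ S then 1 else 0) + if edge (finRotate m i) ∈ S then 1 else 0) := by
  have hinc (i : Fin m) : incidence ends v (edge i) =
      (if vert i = v then 1 else 0) + if vert (finRotate m i) = v then 1 else 0 := by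
    rcases hC i with h | h <;> simp only [incidence, h, add_comm]
  let a (i : Fin m) : ℕ := if edge i ∈ S then 1 else 0
  let b (i : Fin m) : ℕ := if vert (finRotate m i) = v then 1 else 0
  calc deg ends S v = ∑ i, a i * ((if vert i = v then 1 else 0) + b i) := by
        rw [deg_eq_sum_incidence, ← sum_equiv edge (s := univ.filter (edge · ∈ S))
          (by simp) fun _ _ => rfl, sum_filter]
        simp only [a, b, boole_mul, hinc]
    _ = ∑ i, a (finRotate m i) * b i + ∑ i, a i * b i := by
        rw [Equiv.sum_comp (finRotate m) fun i => a i * if vert i = v then 1 else 0]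
        simp only [mul_add, sum_add_distrib]
    _ = _ := by
        rw [← sum_add_distrib, sum_filter]
        refine sum_congr rfl fun i _ => ?_
        simp only [a, b]
        split_ifs <;> simp [add_comm]

end Circuits

section Trails

variable {V E : Type} (ends : E → V × V)

def IsTrail (L : List (E × Bool)) : Prop :=
  L.IsChain (Follows ends) ∧ (L.map Prod.fst).Nodup

lemma deg_toFinset_eq_count [DecidableEq V] [DecidableEq E] {L : List (E × Bool)}
    (hL : (L.map Prod.fst).Nodup) (v : V) :
    deg ends (L.map Prod.fst).toFinset v =
      (L.map (src ends)).count v + (L.map (tgt ends)).count v := by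
  rw [deg_eq_sum_incidence, List.sum_toFinset _ hL, List.map_map]
  clear hL
  induction L with
  | nil => rfl
  | cons d L ih =>
    simp only [List.map_cons, List.sum_cons, List.count_cons, Function.comp_apply, incidence_fst,
      ih, beq_iff_eq]
    omega

lemma IsTrail.append_singleton {L : List (E × Bool)} (hL : IsTrail ends L) (hne : L ≠ [])
    {d : E × Bool} (hd : Follows ends (L.getLast hne) d) (he : d.1 ∉ L.map Prod.fst) :
    IsTrail ends (L ++ [d]) := by
  refine ⟨hL.1.append (List.isChain_singleton d) ?_, ?_⟩
  · simpa [List.getLast?_eq_some_getLast hne] using hd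
  · rw [List.map_append, List.nodup_append]
    refine ⟨hL.2, List.nodup_singleton _, ?_⟩
    rintro e he' _ hd'
    rw [List.map_singleton, List.mem_singleton] at hd'
    exact fun h => he (hd' ▸ h ▸ he')

end Trails

section Euler

variable {V E : Type} {ends : E → V × V} {W : List (E × Bool)}

variable (ends) in
def IsLongestTrail_s2 (W : List (E × Bool)) : Prop :=
  IsTrail ends W ∧ ∀ L, IsTrail ends L → L.length ≤ W.length

variable (ends) in
lemma exists_isLongestTrail_s2 [Fintype E] : ∃ W, IsLongestTrail_s2 ends W := by
  have hfin : {L | IsTrail ends L}.Finite :=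
    (List.finite_length_le _ (Fintype.card E)).subset fun L hL => by
      simpa using hL.2.length_le_card
  exact Set.exists_max_image _ List.length hfin ⟨[], List.IsChain.nil, List.nodup_nil⟩

lemma IsLongestTrail_s2.mem_of_incident_getLast (hW : IsLongestTrail_s2 ends W) (hne : W ≠ [])
    {e : E} (he : (ends e).1 = tgt ends (W.getLast hne) ∨ (ends e).2 = tgt ends (W.getLast hne)) :
    e ∈ W.map Prod.fst := by
  by_contra hnot
  obtain ⟨b, hb⟩ := exists_src_eq ends he
  have := hW.2 _ (hW.1.append_singleton ends hne hb.symm hnot)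
  simp at this

lemma IsLongestTrail_s2.follows_getLast_head [Fintype E] [DecidableEq V] [DecidableEq E]
    (hW : IsLongestTrail_s2 ends W) (heven : ∀ v, Even (deg ends univ v)) (hne : W ≠ []) :
    Follows ends (W.getLast hne) (W.head hne) := by
  set w := tgt ends (W.getLast hne)
  have hdeg : deg ends (W.map Prod.fst).toFinset w = deg ends univ w := by
    rw [deg_eq_sum_incidence, deg_eq_sum_incidence]
    refine sum_subset (subset_univ _) fun e _ he => ?_
    have hinc : ¬((ends e).1 = w ∨ (ends e).2 = w) :=
      fun h => he (List.mem_toFinset.2 (hW.mem_of_incident_getLast hne h))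
    simp only [incidence, not_or] at hinc ⊢
    simp [hinc.1, hinc.2]
  have hcount := congrArg (List.count w) (src_head_cons_map_tgt ends hW.1.1 hne)
  rw [deg_toFinset_eq_count ends hW.1.2] at hdeg
  simp only [List.count_cons, List.count_append, List.count_nil, beq_iff_eq, w] at hcount
  obtain ⟨k, hk⟩ := heven w
  by_contra h
  simp only [Follows, w] at h hk hdeg
  simp only [Ne.symm h, if_true, if_false] at hcount
  omega

lemma IsLongestTrail_s2.cycleChain [Fintype E] [DecidableEq V] [DecidableEq E]
    (hW : IsLongestTrail_s2 ends W) (heven : ∀ v, Even (deg ends univ v)) :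
    Cycle.Chain (Follows ends) W := by
  rcases eq_or_ne W [] with rfl | hne
  · exact Cycle.Chain.nil _
  rw [Cycle.chain_ne_nil _ hne, List.isChain_cons]
  refine ⟨?_, hW.1.1⟩
  rw [List.head?_eq_some_head hne]
  rintro _ ⟨⟩
  exact hW.follows_getLast_head heven hne

lemma tgt_mem_map_src (hW : Cycle.Chain (Follows ends) W) {d : E × Bool} (hd : d ∈ W) :
    tgt ends d ∈ W.map (src ends) := by
  obtain ⟨i, hi, rfl⟩ := List.getElem_of_mem hd
  have hfollow : tgt ends W[i] = src ends _ := hW.rel_getElem_finRotate ⟨i, hi⟩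
  rw [hfollow]
  exact List.mem_map_of_mem (List.getElem_mem _)

lemma exists_incident_not_mem [Fintype E] (hconn : ConnOn ends univ)
    (hW : Cycle.Chain (Follows ends) W) (hne : W ≠ []) {e₀ : E}
    (he₀ : e₀ ∉ W.map Prod.fst) :
    ∃ d ∈ W, ∃ e ∉ W.map Prod.fst, (ends e).1 = src ends d ∨ (ends e).2 = src ends d := by
  by_contra! h
  have hvisit : ∀ v, v ∈ W.map (src ends) := by
    intro v
    induction hconn (src ends (W.head hne)) v with
    | refl => exact List.mem_map_of_mem (List.head_mem hne)
    | @tail a b _ hab ih =>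
      obtain ⟨d, hd, hda⟩ := List.mem_map.1 ih
      obtain ⟨e, -, he⟩ := hab
      have heW : e ∈ W.map Prod.fst := by
        by_contra heW
        obtain ⟨h1, h2⟩ := h d hd e heW
        rcases he with he | he <;> rw [he] at h1 h2
        exacts [h1 hda.symm, h2 hda.symm]
      obtain ⟨d', hd', rfl⟩ := List.mem_map.1 heW
      have hb : src ends d' = b ∨ tgt ends d' = b := by
        rcases he with he | he <;> rcases ends_eq_src_tgt_or ends d' with h' | h' <;>
          rw [h'] at he <;> simp only [Prod.mk.injEq] at he <;> tauto
      rcases hb with hb | hb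
      · exact hb ▸ List.mem_map_of_mem hd'
      · exact hb ▸ tgt_mem_map_src hW hd'
  obtain ⟨d, hd, hde⟩ := List.mem_map.1 (hvisit (ends e₀).1)
  exact (h d hd e₀ he₀).1 hde.symm

lemma exists_longer_trail (hW : IsTrail ends W) (hcyc : Cycle.Chain (Follows ends) W)
    {d : E × Bool} (hd : d ∈ W) {d' : E × Bool} (hsrc : src ends d' = src ends d)
    (hd' : d'.1 ∉ W.map Prod.fst) : ∃ L, IsTrail ends L ∧ L.length = W.length + 1 := by
  obtain ⟨j, hj, rfl⟩ := List.getElem_of_mem hd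
  set W' := W.rotate j
  have hne : W' ≠ [] := by simpa [W'] using List.ne_nil_of_mem hd
  have hcyc' : Cycle.Chain (Follows ends) W' := by
    rwa [Cycle.coe_eq_coe.2 (List.IsRotated.forall W j)]
  rw [Cycle.chain_ne_nil _ hne, List.isChain_cons, List.head?_eq_some_head hne] at hcyc'
  have hperm : (W'.map Prod.fst).Perm (W.map Prod.fst) := (List.rotate_perm W j).map _
  have hhead : W'.head hne = W[j] := by
    simp [W', List.head_eq_getElem, List.getElem_rotate, Nat.mod_eq_of_lt hj]
  refine ⟨W' ++ [d'], ?_, by simp [W']⟩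
  refine IsTrail.append_singleton ends ⟨hcyc'.2, hperm.nodup_iff.2 hW.2⟩ hne ?_
    (hperm.mem_iff.not.2 hd')
  rw [Follows, hsrc, ← hhead]
  exact hcyc'.1 _ rfl

lemma IsLongestTrail_s2.mem_map_fst [Fintype E] [DecidableEq V] [DecidableEq E]
    (hW : IsLongestTrail_s2 ends W) (hconn : ConnOn ends univ) (heven : ∀ v, Even (deg ends univ v))
    (e : E) : e ∈ W.map Prod.fst := by
  by_contra he
  rcases eq_or_ne W [] with rfl | hne
  · have := hW.2 [(e, true)] ⟨List.isChain_singleton _, List.nodup_singleton _⟩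
    simp at this
  have hcyc := hW.cycleChain heven
  obtain ⟨d, hd, e', he', hinc⟩ := exists_incident_not_mem hconn hcyc hne he
  obtain ⟨b, hb⟩ := exists_src_eq ends hinc
  obtain ⟨L, hL, hlen⟩ := exists_longer_trail hW.1 hcyc hd hb he'
  have := hW.2 L hL
  omega

lemma exists_isEulerCircuit_of_cycleChain (hW : IsTrail ends W)
    (hcyc : Cycle.Chain (Follows ends) W) (hcover : ∀ e, e ∈ W.map Prod.fst) :
    ∃ (m : ℕ) (edge : Fin m ≃ E) (vert : Fin m → V), IsEulerCircuit ends edge vert := by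
  have hbij : Function.Bijective fun i : Fin W.length => W[i].1 := by
    refine ⟨fun i j hij => Fin.ext ?_, fun e => ?_⟩
    · exact (hW.2.getElem_inj_iff (i := i) (j := j) (hi := by simp) (hj := by simp)).1
        (by simpa using hij)
    · obtain ⟨i, hi, he⟩ := List.getElem_of_mem (hcover e)
      exact ⟨⟨i, by simpa using hi⟩, by simpa using he⟩
  refine ⟨W.length, Equiv.ofBijective _ hbij, fun i => src ends W[i], fun i => ?_⟩
  have hfollow : tgt ends W[i] = src ends W[finRotate _ i] := hcyc.rel_getElem_finRotate i
  show ends W[i].1 = (src ends W[i], src ends W[finRotate _ i]) ∨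
    ends W[i].1 = (src ends W[finRotate _ i], src ends W[i])
  rw [← hfollow]
  exact ends_eq_src_tgt_or ends W[i]

variable (ends) in
theorem exists_isEulerCircuit [Fintype E] [DecidableEq V] [DecidableEq E]
    (hconn : ConnOn ends univ) (heven : ∀ v, Even (deg ends univ v)) :
    ∃ (m : ℕ) (edge : Fin m ≃ E) (vert : Fin m → V), IsEulerCircuit ends edge vert := by
  obtain ⟨W, hW⟩ := exists_isLongestTrail_s2 ends
  exact exists_isEulerCircuit_of_cycleChain hW.1 (hW.cycleChain heven) (hW.mem_map_fst hconn heven)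

end Euler

section Splitting

variable {V E : Type} [DecidableEq V] [DecidableEq E] {ends : E → V × V} {m : ℕ}
  {edge : Fin m ≃ E} {vert : Fin m → V}

lemma IsEulerCircuit.two_mul_card_visits [Fintype E] (hC : IsEulerCircuit ends edge vert)
    (v : V) :
    2 * #{i | vert (finRotate m i) = v} = deg ends univ v := by
  simp [hC.deg_eq, mul_comm]

lemma IsEulerCircuit.deg_eq_of_sub_eq (hC : IsEulerCircuit ends edge vert) {c : Fin m → ZMod 2}
    {t : V → Fin m} (ht : ∀ v, vert (finRotate m (t v)) = v)
    (hc : ∀ i, c (finRotate m i) - c i = if t (vert (finRotate m i)) ≠ i then 1 else 0)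
    (v : V) :
    deg ends (({i | c i = 1} : Finset (Fin m)).map edge.toEmbedding) v =
      (#{i | vert (finRotate m i) = v} - 1) + 2 * if c (t v) = 1 then 1 else 0 := by
  have hsame : ∀ a b : ZMod 2, b - a = 0 →
      ((if a = 1 then 1 else 0) + if b = 1 then 1 else 0 : ℕ) = 2 * if a = 1 then 1 else 0 := by
    decide
  have hswap : ∀ a b : ZMod 2, b - a = 1 →
      ((if a = 1 then 1 else 0) + if b = 1 then 1 else 0 : ℕ) = 1 := by
    decide
  have hmem : t v ∈ ({i | vert (finRotate m i) = v} : Finset _) :=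
    mem_filter.2 ⟨mem_univ _, ht v⟩
  simp only [hC.deg_eq, mem_map_equiv, mem_filter, mem_univ, true_and, Equiv.symm_apply_apply]
  rw [← add_sum_erase _ _ hmem, hsame _ _ (by rw [hc, ht, if_neg (not_not_intro rfl)]),
    add_comm, sum_congr rfl fun i hi => hswap _ _ ?_, sum_const, smul_eq_mul, mul_one,
    card_erase_of_mem hmem]
  obtain ⟨hi, hv⟩ := mem_erase.1 hi
  rw [hc, (mem_filter.1 hv).2, if_pos (Ne.symm hi)]

theorem IsEulerCircuit.exists_deg_eq_pred_or_succ [Fintype V] [Fintype E]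
    (hC : IsEulerCircuit ends edge vert) {r : ℕ} (hr : 0 < r)
    (hreg : ∀ v, deg ends univ v = 2 * r) (heven : Even ((r + 1) * Fintype.card V)) :
    ∃ H : Finset E, ∀ v, deg ends H v = r - 1 ∨ deg ends H v = r + 1 := by
  have hvisits (v : V) : #{i | vert (finRotate m i) = v} = r := by
    have := hC.two_mul_card_visits v
    rw [hreg] at this
    omega
  have hvisited (v : V) : ∃ i, vert (finRotate m i) = v := by
    obtain ⟨i, hi⟩ := card_pos.1 ((hvisits v).symm ▸ hr)
    exact ⟨i, (mem_filter.1 hi).2⟩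
  choose t ht using hvisited
  have heven' : Even ((r - 1) * Fintype.card V) := by
    have hsplit : (r - 1) * Fintype.card V + 2 * Fintype.card V = (r + 1) * Fintype.card V := by
      rw [← add_mul]
      congr 1
      omega
    rw [← hsplit] at heven
    exact (Nat.even_add.1 heven).2 (even_two_mul _)
  obtain ⟨c, hc⟩ := Fin.exists_finRotate_sub_eq_of_sum_eq_zero (G := ZMod 2)
    (fun i => if t (vert (finRotate m i)) ≠ i then 1 else 0) (by
      rw [sum_boole, card_filter_ne_section (g := fun i => vert (finRotate m i)) ht hvisits,
        ZMod.natCast_eq_zero_iff_even]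
      exact heven')
  refine ⟨({i | c i = 1} : Finset (Fin m)).map edge.toEmbedding, fun v => ?_⟩
  rw [hC.deg_eq_of_sub_eq ht hc, hvisits]
  split_ifs <;> omega

end Splitting

end MG

theorem stmt2 {V E : Type} [Fintype V] [Fintype E] [DecidableEq V] [DecidableEq E]
    (ends : E → V × V) (r : ℕ) (hr : 0 < r)
    (hconn : ConnOn ends Finset.univ)
    (hreg : ∀ v : V, deg ends Finset.univ v = 2 * r)
    (heven : Even ((r + 1) * Fintype.card V)) :
    ∃ H : Finset E,
      (∀ v : V, deg ends H v = r - 1 ∨ deg ends H v = r + 1) ∧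
      (∀ v : V, deg ends Hᶜ v = r - 1 ∨ deg ends Hᶜ v = r + 1) := by
  obtain ⟨m, edge, vert, hC⟩ :=
    exists_isEulerCircuit ends hconn fun v => hreg v ▸ even_two_mul r
  obtain ⟨H, hH⟩ := hC.exists_deg_eq_pred_or_succ hr hreg heven
  refine ⟨H, hH, fun v => ?_⟩
  have hsum := deg_add_deg_compl ends H v
  rw [hreg] at hsum
  rcases hH v with h | h <;> omega
end

section
/- If G is an m-edge-connected multigraph with m ≥ 2·bi(G) + 1, then there is a unique unordered bipartition {X, Y} of V(G) satisfying e_G(X) + e_G(Y) < m − bi(G), where e_G(S) denotes the number of edges with both endpoints in S. -/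
namespace MG

variable {V E : Type} [Fintype V] [Fintype E] [DecidableEq V] [DecidableEq E]

lemma card_inside_add (ends : E → V × V) (X : Finset V) :
    (inside ends Finset.univ X).card + (inside ends Finset.univ Xᶜ).card
      = (bad ends Finset.univ X).card := by
  classical
  rw [inside, inside, bad, ← Finset.card_union_of_disjoint, ← Finset.filter_or]
  · congr 1
    apply Finset.filter_congr
    intro e _
    simp only [Finset.mem_compl]
    tauto
  · rw [Finset.disjoint_filter]
    intro e _ h
    simp only [Finset.mem_compl]
    tauto

end MG

open MG Finset

set_option maxHeartbeats 1000000 in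
theorem stmt6 {V E : Type} [Fintype V] [Fintype E] [DecidableEq V] [DecidableEq E]
    (ends : E → V × V) (m : ℕ)
    (hconn : EdgeConn ends m)
    (hm : 2 * biIndexOn ends Finset.univ + 1 ≤ m) :
    ∃ X : Finset V,
      ((inside ends Finset.univ X).card + (inside ends Finset.univ Xᶜ).card
          < m - biIndexOn ends Finset.univ) ∧
      ∀ X' : Finset V,
        (inside ends Finset.univ X').card + (inside ends Finset.univ X'ᶜ).card
            < m - biIndexOn ends Finset.univ →
          X' = X ∨ X' = Xᶜ := by
  classical
  set b := biIndexOn ends Finset.univ with hb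
  obtain ⟨X, -, hX⟩ := Finset.exists_mem_eq_inf' (Finset.univ_nonempty)
    (fun X : Finset V => (bad ends Finset.univ X).card)
  have hXb : (bad ends Finset.univ X).card = b := by rw [hb, biIndexOn]; exact hX.symm
  refine ⟨X, ?_, ?_⟩
  · rw [card_inside_add, hXb]
    omega
  · intro X' hX'
    rw [card_inside_add] at hX'
    set A : Finset V := (X \ X') ∪ (X' \ X) with hA
    have hmem : ∀ v : V, v ∈ A ↔ ¬ (v ∈ X ↔ v ∈ X') := by
      intro v
      simp only [hA, Finset.mem_union, Finset.mem_sdiff]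
      tauto
    by_cases h0 : A = ∅
    · left
      ext v
      have := (Finset.notMem_empty v)
      have h := hmem v
      rw [h0] at h
      simp only [Finset.notMem_empty, false_iff, not_not] at h
      exact h.symm
    by_cases h1 : A = Finset.univ
    · right
      ext v
      have hv := (hmem v).mp (h1 ▸ Finset.mem_univ v)
      simp only [Finset.mem_compl]
      tauto
    · exfalso
      have hne : A.Nonempty := Finset.nonempty_iff_ne_empty.mpr h0
      have hcut := hconn A hne h1
      have hsub : cut ends Finset.univ A ⊆
          bad ends Finset.univ X ∪ bad ends Finset.univ X' := by
        intro e he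
        rw [cut, Finset.mem_filter] at he
        rw [Finset.mem_union, bad, bad, Finset.mem_filter, Finset.mem_filter]
        by_contra hc
        push_neg at hc
        apply he.2
        have h1 := hc.1 (Finset.mem_univ e)
        have h2 := hc.2 (Finset.mem_univ e)
        rw [hmem, hmem]
        tauto
      have hcard : (cut ends Finset.univ A).card
          ≤ (bad ends Finset.univ X).card + (bad ends Finset.univ X').card :=
        le_trans (Finset.card_le_card hsub) (Finset.card_union_le _ _)
      omega
end

section
/- Let G be a multigraph, k a positive even integer, and f : V(G) → Z_k a mapping with ∑_{v∈V(G)} f(v) even (as integer representatives in {0,...,k−1}, or equivalently (k−1)·∑ f(v) even). If bi(G) ≥ k/2 − 1, then f is compatible with G, i.e., for every bipartition (X,Y) of V(G) there exists an integer x with 0 ≤ x ≤ e_G(X) and ∑_{v∈X} f(v) − 2x ≡ ∑_{v∈Y} f(v) (mod k), or an integer y with 0 ≤ y ≤ e_G(Y) and ∑_{v∈X} f(v) ≡ ∑_{v∈Y} f(v) − 2y (mod k). -/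
open MG Finset

theorem stmt7 {V E : Type} [Fintype V] [Fintype E] [DecidableEq V] [DecidableEq E]
    (ends : E → V × V) (k : ℕ) (hk : 0 < k) (hke : Even k) (f : V → ZMod k)
    (hsum : Even (∑ v : V, (f v).val))
    (hbi : k / 2 - 1 ≤ biIndexOn ends Finset.univ) :
    ∀ X : Finset V, CompatAt ends f X := by
  intro X
  classical
  haveI : NeZero k := ⟨hk.ne'⟩
  set eX := (inside ends Finset.univ X).card with heX
  set eY := (inside ends Finset.univ Xᶜ).card with heY
  -- card of bad edges = eX + eY
  have hunion : bad ends Finset.univ X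
      = inside ends Finset.univ X ∪ inside ends Finset.univ Xᶜ := by
    ext e
    simp only [bad, inside, Finset.mem_filter, Finset.mem_union, Finset.mem_compl,
      Finset.mem_univ, true_and]
    tauto
  have hdisj : Disjoint (inside ends Finset.univ X) (inside ends Finset.univ Xᶜ) := by
    rw [Finset.disjoint_left]
    intro e he1 he2
    simp only [inside, Finset.mem_filter, Finset.mem_compl] at he1 he2
    tauto
  have hbad : (bad ends Finset.univ X).card = eX + eY := by
    rw [hunion, Finset.card_union_of_disjoint hdisj]
  have hle : biIndexOn ends Finset.univ ≤ (bad ends Finset.univ X).card :=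
    Finset.inf'_le _ (Finset.mem_univ X)
  have hEX : k / 2 - 1 ≤ eX + eY := by omega
  -- sums
  set a := ∑ v ∈ X, f v with ha
  set b := ∑ v ∈ Xᶜ, f v with hb
  set SX := ∑ v ∈ X, (f v).val with hSX
  set SY := ∑ v ∈ Xᶜ, (f v).val with hSY
  have hcast : ∀ v : V, ((f v).val : ZMod k) = f v := fun v =>
    (ZMod.natCast_val (f v)).trans (ZMod.cast_id _ _)
  have haSX : a = ((SX : ℕ) : ZMod k) := by
    rw [ha, hSX, Nat.cast_sum]
    exact Finset.sum_congr rfl fun v _ => (hcast v).symm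
  have hbSY : b = ((SY : ℕ) : ZMod k) := by
    rw [hb, hSY, Nat.cast_sum]
    exact Finset.sum_congr rfl fun v _ => (hcast v).symm
  have hsplit : SX + SY = ∑ v : V, (f v).val := by
    rw [hSX, hSY]
    exact Finset.sum_add_sum_compl X _
  obtain ⟨c, hc⟩ := hsum
  -- a - b = 2 * c0 for some c0
  set c0 : ZMod k := (SX : ZMod k) - (c : ZMod k) with hc0
  have hab2 : a - b = 2 * c0 := by
    have hZ : ((SX : ℤ) - SY) = 2 * ((SX : ℤ) - c) := by omega
    have hZ2 := congrArg (fun z : ℤ => (z : ZMod k)) hZ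
    push_cast at hZ2
    rw [haSX, hbSY, hc0]
    exact hZ2
  -- parity of val
  have hd_even : Even ((2 * c0).val) := by
    have h1 : (2 * c0).val = (c0.val + c0.val) % k := by
      rw [two_mul, ZMod.val_add]
    rw [h1, Nat.even_iff, Nat.mod_mod_of_dvd _ hke.two_dvd]
    omega
  obtain ⟨t, ht⟩ : ∃ t, (2 * c0).val = 2 * t := by
    obtain ⟨t, ht⟩ := hd_even; exact ⟨t, by omega⟩
  have hdlt : (2 * c0).val < k := ZMod.val_lt _
  have h2tk : 2 * t ≤ k := by omega
  have hab : a - b = ((2 * t : ℕ) : ZMod k) := by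
    rw [hab2, ← ht, ZMod.natCast_val, ZMod.cast_id]
  obtain ⟨m, hm⟩ := hke
  by_cases hcase : t ≤ eX
  · exact Or.inl ⟨t, hcase, by linear_combination hab⟩
  · refine Or.inr ⟨k / 2 - t, by omega, ?_⟩
    have hy2 : 2 * (k / 2 - t) = k - 2 * t := by omega
    have hcast2 : ((2 * (k / 2 - t) : ℕ) : ZMod k) = -(((2 * t : ℕ) : ZMod k)) := by
      rw [hy2, Nat.cast_sub h2tk, ZMod.natCast_self]
      ring
    rw [hcast2]
    linear_combination hab
end

section
/- Let G be a multigraph, k an odd positive integer, and f : V(G) → Z_k any mapping. If bi(G) ≥ k − 1, then f is compatible with G: for every bipartition (X,Y) of V(G), there exists 0 ≤ x ≤ e_G(X) with ∑_{v∈X} f(v) − 2x ≡ ∑_{v∈Y} f(v) (mod k), or 0 ≤ y ≤ e_G(Y) with ∑_{v∈X} f(v) ≡ ∑_{v∈Y} f(v) − 2y (mod k). -/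
open MG Finset

theorem stmt8 {V E : Type} [Fintype V] [Fintype E] [DecidableEq V] [DecidableEq E]
    (ends : E → V × V) (k : ℕ) (hk : 0 < k) (hko : Odd k) (f : V → ZMod k)
    (hbi : k - 1 ≤ biIndexOn ends Finset.univ) :
    ∀ X : Finset V, CompatAt ends f X := by
  intro X
  haveI : NeZero k := ⟨hk.ne'⟩
  have hcop : Nat.Coprime 2 k := Nat.coprime_two_left.mpr hko
  set u : (ZMod k)ˣ := ZMod.unitOfCoprime 2 hcop with hu
  have hu2 : (u : ZMod k) = 2 := by simp [hu, ZMod.coe_unitOfCoprime]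
  set d : ZMod k := (∑ v ∈ X, f v) - ∑ v ∈ Xᶜ, f v with hd
  set x0 : ℕ := (((u⁻¹ : (ZMod k)ˣ) : ZMod k) * d).val with hx0
  set y0 : ℕ := (((u⁻¹ : (ZMod k)ˣ) : ZMod k) * (-d)).val with hy0
  have hx0c : ((x0 : ℕ) : ZMod k) = ((u⁻¹ : (ZMod k)ˣ) : ZMod k) * d := by
    simp [hx0, ZMod.natCast_val, ZMod.cast_id]
  have hy0c : ((y0 : ℕ) : ZMod k) = ((u⁻¹ : (ZMod k)ˣ) : ZMod k) * (-d) := by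
    simp [hy0, ZMod.natCast_val, ZMod.cast_id]
  have h2x : ((2 * x0 : ℕ) : ZMod k) = d := by
    push_cast
    rw [hx0c, ← hu2, ← mul_assoc, ← Units.val_mul, mul_inv_cancel, Units.val_one, one_mul]
  have h2y : ((2 * y0 : ℕ) : ZMod k) = -d := by
    push_cast
    rw [hy0c, ← hu2, ← mul_assoc, ← Units.val_mul, mul_inv_cancel, Units.val_one, one_mul]
  -- counting
  set a := (inside ends Finset.univ X).card with ha
  set b := (inside ends Finset.univ Xᶜ).card with hb
  have hbadeq : bad ends Finset.univ X = inside ends Finset.univ X ∪ inside ends Finset.univ Xᶜ := by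
    ext e
    simp only [bad, inside, Finset.mem_union, Finset.mem_filter, Finset.mem_univ, true_and,
      Finset.mem_compl]
    tauto
  have hdisj : Disjoint (inside ends Finset.univ X) (inside ends Finset.univ Xᶜ) := by
    simp only [Finset.disjoint_left, inside, Finset.mem_filter, Finset.mem_univ, true_and,
      Finset.mem_compl]
    tauto
  have hab : k - 1 ≤ a + b := by
    have h1 : biIndexOn ends Finset.univ ≤ (bad ends Finset.univ X).card :=
      Finset.inf'_le _ (Finset.mem_univ X)
    rw [hbadeq, Finset.card_union_of_disjoint hdisj] at h1
    omega
  have hxlt : x0 < k := ZMod.val_lt _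
  have hylt : y0 < k := ZMod.val_lt _
  have hdvd : k ∣ x0 + y0 := by
    have : ((x0 + y0 : ℕ) : ZMod k) = 0 := by
      push_cast
      rw [hx0c, hy0c]; ring
    exact (ZMod.natCast_eq_zero_iff _ _).mp this
  have hkey : x0 ≤ a ∨ y0 ≤ b := by
    by_contra hcon
    push_neg at hcon
    obtain ⟨m, hm⟩ := hdvd
    rcases hcon with ⟨h1, h2⟩
    have : m < 2 := by nlinarith
    interval_cases m <;> omega
  rcases hkey with h | h
  · left
    exact ⟨x0, h, by rw [h2x, hd]; ring⟩
  · right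
    exact ⟨y0, h, by rw [h2y, hd]; ring⟩
end

section
/- Let G be a (2k−2)-edge-connected multigraph, k a positive integer, and f : V(G) → Z_k a mapping with (k−1)·∑_{v∈V(G)} f(v) even. If f is compatible with G with respect to some bipartition (X,Y) of V(G) satisfying e_G(X) + e_G(Y) ≤ k − 1, then f is compatible with G with respect to every bipartition of V(G). -/
open MG Finset

/-!
If `e(X) + e(Xᶜ) ≥ k - 1`, the parity hypothesis makes `∑_X f - ∑_Xᶜ f` twice an element of
`ZMod k`, and the values `2x` (`x ≤ e(X)`) and `-2y` (`y ≤ e(Xᶜ)`) together cover all such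
doubles. Otherwise every edge of the cut of `X ∆ X₀` lies inside a side of `X` or of `X₀`, so that
cut has at most `2k - 3` edges; edge-connectivity then forces `X = X₀` or `X = X₀ᶜ`, and
compatibility is symmetric in the two sides.
-/

open scoped symmDiff

namespace MG

theorem exists_two_mul_eq_of_even_pred_mul {k n : ℕ} (hk : k ≠ 0) (h : Even ((k - 1) * n)) :
    ∃ c : ZMod k, 2 * c = n := by
  rcases Nat.even_or_odd k with hke | hko
  · obtain ⟨m, rfl⟩ : Even n :=
      (Nat.even_mul.mp h).resolve_left fun h' => by
        rw [Nat.even_sub (by omega)] at h'; simp_all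
    exact ⟨m, by push_cast; ring⟩
  · refine ⟨((k + 1) / 2 : ℕ) * n, ?_⟩
    have h2 : (2 : ZMod k) * ((k + 1) / 2 : ℕ) = 1 := by
      have : ((2 * ((k + 1) / 2) : ℕ) : ZMod k) = 1 := by
        rw [show 2 * ((k + 1) / 2) = k + 1 by obtain ⟨m, rfl⟩ := hko; omega]
        simp
      exact_mod_cast this
    rw [← mul_assoc, h2, one_mul]

variable {V E : Type} [DecidableEq V]

/-- An edge crossing `X ∆ Y` crosses exactly one of `X`, `Y`, so it lies inside a side of the
other. -/
theorem cut_symmDiff_subset [DecidableEq E] (ends : E → V × V) (S : Finset E) (X Y : Finset V) :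
    cut ends S (X ∆ Y) ⊆ bad ends S X ∪ bad ends S Y := by
  intro e he
  simp only [cut, bad, mem_filter, mem_union, mem_symmDiff] at he ⊢
  tauto

variable [Fintype V] [Fintype E]

theorem compatAt_compl (ends : E → V × V) {k : ℕ} (f : V → ZMod k) {X : Finset V}
    (h : CompatAt ends f X) : CompatAt ends f Xᶜ := by
  rw [CompatAt, compl_compl]
  rcases h with ⟨x, hx, he⟩ | ⟨y, hy, he⟩
  · exact Or.inr ⟨x, hx, he.symm⟩
  · exact Or.inl ⟨y, hy, he.symm⟩

theorem compatAt_of_pred_le_card_inside (ends : E → V × V) {k : ℕ} (hk : 0 < k)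
    (f : V → ZMod k) {c : ZMod k} (hc : 2 * c = ∑ v, f v) (X : Finset V)
    (hX : k - 1 ≤ (inside ends univ X).card + (inside ends univ Xᶜ).card) :
    CompatAt ends f X := by
  have : NeZero k := ⟨hk.ne'⟩
  obtain ⟨d, hd⟩ : ∃ d : ZMod k, 2 * d = ∑ v ∈ X, f v - ∑ v ∈ Xᶜ, f v :=
    ⟨c - ∑ v ∈ Xᶜ, f v, by rw [mul_sub, hc, ← sum_add_sum_compl X f]; ring⟩
  rcases le_or_gt d.val (inside ends univ X).card with h | h
  · refine Or.inl ⟨d.val, h, ?_⟩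
    rw [Nat.cast_mul, ZMod.natCast_zmod_val, Nat.cast_ofNat, hd]; ring
  · have hdk := ZMod.val_lt d
    refine Or.inr ⟨k - d.val, by omega, ?_⟩
    rw [Nat.cast_mul, Nat.cast_sub hdk.le, ZMod.natCast_self, ZMod.natCast_zmod_val,
      Nat.cast_ofNat]
    linear_combination -hd

theorem card_bad_univ [DecidableEq E] (ends : E → V × V) (X : Finset V) :
    (bad ends univ X).card = (inside ends univ X).card + (inside ends univ Xᶜ).card := by
  rw [← card_union_of_disjoint]
  · congr 1
    ext e
    simp only [bad, inside, mem_filter, mem_union, mem_compl, mem_univ, true_and]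
    tauto
  · rw [disjoint_left]
    intro e h1 h2
    simp only [inside, mem_filter, mem_compl, mem_univ, true_and] at h1 h2
    exact h2.1 h1.1

theorem eq_or_eq_compl_of_card_bad_add_lt [DecidableEq E] (ends : E → V × V) {m : ℕ}
    (hconn : EdgeConn ends m) {X Y : Finset V}
    (h : (bad ends univ X).card + (bad ends univ Y).card < m) :
    X = Y ∨ X = Yᶜ := by
  have hcut : (cut ends univ (X ∆ Y)).card < m :=
    ((card_le_card (cut_symmDiff_subset ends univ X Y)).trans (card_union_le _ _)).trans_lt h
  rcases (X ∆ Y).eq_empty_or_nonempty with h0 | hne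
  · exact Or.inl (symmDiff_eq_bot.mp h0)
  · by_cases hu : X ∆ Y = univ
    · right
      ext v
      have hv := hu ▸ mem_univ v
      rw [mem_symmDiff] at hv
      rw [mem_compl]
      tauto
    · exact absurd (hconn _ hne hu) hcut.not_ge

end MG

theorem stmt9 {V E : Type} [Fintype V] [Fintype E] [DecidableEq V] [DecidableEq E]
    (ends : E → V × V) (k : ℕ) (hk : 0 < k) (f : V → ZMod k)
    (hconn : EdgeConn ends (2 * k - 2))
    (hsum : Even ((k - 1) * ∑ v : V, (f v).val))
    (X₀ : Finset V)
    (hX₀ : (inside ends Finset.univ X₀).card + (inside ends Finset.univ X₀ᶜ).card ≤ k - 1)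
    (hcompat : CompatAt ends f X₀) :
    ∀ X : Finset V, CompatAt ends f X := by
  have : NeZero k := ⟨hk.ne'⟩
  intro X
  obtain ⟨c, hc⟩ := exists_two_mul_eq_of_even_pred_mul hk.ne' hsum
  simp only [Nat.cast_sum, ZMod.natCast_zmod_val] at hc
  by_cases hX : k - 1 ≤ (inside ends univ X).card + (inside ends univ Xᶜ).card
  · exact compatAt_of_pred_le_card_inside ends hk f hc X hX
  · rw [← card_bad_univ] at hX hX₀
    have hsmall : (bad ends univ X).card + (bad ends univ X₀).card < 2 * k - 2 := by omega
    rcases eq_or_eq_compl_of_card_bad_add_lt ends hconn hsmall with rfl | rfl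
    · exact hcompat
    · exact compatAt_compl ends f hcompat
end

section
/- Every 2m-tree-connected loopless multigraph G has a bipartite spanning subgraph H that is m-tree-connected and satisfies d_H(A) ≥ ⌈d_G(A)/2⌉ for every vertex set A ⊆ V(G). -/
namespace MG

open Finset

variable {V E : Type} {ends : E → V × V}

def Reachable (ends : E → V × V) (S : Finset E) (a b : V) : Prop :=
  Relation.ReflTransGen (adjOn ends S) a b

namespace Reachable

variable {S T : Finset E} {a b c : V}

theorem refl (a : V) : Reachable ends S a a := Relation.ReflTransGen.refl

theorem trans (h₁ : Reachable ends S a b) (h₂ : Reachable ends S b c) :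
    Reachable ends S a c :=
  Relation.ReflTransGen.trans h₁ h₂

theorem symm (h : Reachable ends S a b) : Reachable ends S b a :=
  have : Std.Symm (adjOn ends S) := ⟨fun _ _ ⟨e, he, h⟩ => ⟨e, he, h.symm⟩⟩
  Relation.ReflTransGen.stdSymm.symm _ _ h

theorem mono (hST : S ⊆ T) (h : Reachable ends S a b) : Reachable ends T a b :=
  Relation.ReflTransGen.mono (fun _ _ ⟨e, he, h⟩ => ⟨e, hST he, h⟩) _ _ h

theorem of_mem {e : E} (he : e ∈ S) : Reachable ends S (ends e).1 (ends e).2 :=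
  Relation.ReflTransGen.single ⟨e, he, Or.inl rfl⟩

theorem of_forall_mem (hT : ∀ e ∈ T, Reachable ends S (ends e).1 (ends e).2)
    (h : Reachable ends T a b) : Reachable ends S a b := by
  refine Relation.ReflTransGen.lift' id (fun x y ⟨e, he, hxy⟩ => ?_) _ _ h
  show Reachable ends S x y
  rcases hxy with hxy | hxy
  · simpa [hxy] using hT e he
  · simpa [hxy] using (hT e he).symm

end Reachable

section Insert

variable [DecidableEq E] {S S' : Finset E} {u : E} {a b : V}

theorem reachable_insert_iff :
    Reachable ends (insert u S) a b ↔ Reachable ends S a b ∨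
      (Reachable ends S a (ends u).1 ∧ Reachable ends S (ends u).2 b) ∨
      (Reachable ends S a (ends u).2 ∧ Reachable ends S (ends u).1 b) := by
  constructor
  · intro h
    induction h with
    | refl => exact Or.inl (.refl a)
    | tail _ hstep ih =>
      rename_i b c _
      obtain ⟨e, he, hbc⟩ := hstep
      rcases mem_insert.mp he with rfl | he
      · obtain ⟨h₁, h₂⟩ | ⟨h₁, h₂⟩ : (ends e).1 = b ∧ (ends e).2 = c ∨
            (ends e).1 = c ∧ (ends e).2 = b := by
          rcases hbc with h | h <;> simp [h]
        all_goals subst h₁ h₂; rcases ih with h | ⟨h, h'⟩ | ⟨h, h'⟩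
        all_goals first
          | exact Or.inl h
          | exact Or.inr (Or.inl ⟨h, .refl _⟩)
          | exact Or.inr (Or.inr ⟨h, .refl _⟩)
      · have hstep : Reachable ends S b c := Relation.ReflTransGen.single ⟨e, he, hbc⟩
        rcases ih with h | ⟨h, h'⟩ | ⟨h, h'⟩
        · exact Or.inl (h.trans hstep)
        · exact Or.inr (Or.inl ⟨h, h'.trans hstep⟩)
        · exact Or.inr (Or.inr ⟨h, h'.trans hstep⟩)
  · have hS : S ⊆ insert u S := subset_insert u S
    have hu : Reachable ends (insert u S) (ends u).1 (ends u).2 :=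
      .of_mem (mem_insert_self u S)
    rintro (h | ⟨h₁, h₂⟩ | ⟨h₁, h₂⟩)
    · exact h.mono hS
    · exact ((h₁.mono hS).trans hu).trans (h₂.mono hS)
    · exact ((h₁.mono hS).trans hu.symm).trans (h₂.mono hS)

theorem reachable_insert_iff_of_reachable (hu : Reachable ends S (ends u).1 (ends u).2) :
    Reachable ends (insert u S) a b ↔ Reachable ends S a b := by
  refine ⟨fun h => ?_, (·.mono (subset_insert u S))⟩
  rcases reachable_insert_iff.mp h with h | ⟨h₁, h₂⟩ | ⟨h₁, h₂⟩
  · exact h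
  · exact (h₁.trans hu).trans h₂
  · exact (h₁.trans hu.symm).trans h₂

theorem reachable_ends_of_reachable_insert (h : Reachable ends (insert u S) a b)
    (hn : ¬ Reachable ends S a b) (hSS' : S ⊆ S') (hab : Reachable ends S' a b) :
    Reachable ends S' (ends u).1 (ends u).2 := by
  rcases reachable_insert_iff.mp h with h | ⟨h₁, h₂⟩ | ⟨h₁, h₂⟩
  · exact absurd h hn
  · exact ((h₁.mono hSS').symm.trans hab).trans (h₂.mono hSS').symm
  · exact (((h₁.mono hSS').symm.trans hab).trans (h₂.mono hSS').symm).symm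

end Insert

def IsForest [DecidableEq E] (ends : E → V × V) (S : Finset E) : Prop :=
  ∀ e ∈ S, ¬ Reachable ends (S.erase e) (ends e).1 (ends e).2

namespace IsForest

variable [DecidableEq E] {F F' : Finset E} {u : E}

theorem mono (hF : IsForest ends F) (hF' : F' ⊆ F) : IsForest ends F' := fun e he hc =>
  hF e (hF' he) (hc.mono (erase_subset_erase e hF'))

theorem insert (hF : IsForest ends F) (hu : ¬ Reachable ends F (ends u).1 (ends u).2) :
    IsForest ends (insert u F) := by
  have huF : u ∉ F := fun h => hu (.of_mem h)
  intro e he hc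
  rcases mem_insert.mp he with rfl | he
  · rw [erase_insert huF] at hc
    exact hu hc
  · rw [erase_insert_of_ne (ne_of_mem_of_not_mem he huF).symm] at hc
    exact hu (reachable_ends_of_reachable_insert hc (hF e he) (erase_subset e F) (.of_mem he))

theorem exists_separating_path (hF : IsForest ends F) {a b : V} (h : Reachable ends F a b) :
    ∃ P ⊆ F, (∀ f ∈ P, ¬ Reachable ends (F.erase f) a b) ∧ Reachable ends P a b := by
  induction F using Finset.strongInduction with
  | H F ih =>
    by_cases hall : ∀ f ∈ F, ¬ Reachable ends (F.erase f) a b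
    · exact ⟨F, subset_rfl, hall, h⟩
    push Not at hall
    obtain ⟨f, hf, hfab⟩ := hall
    obtain ⟨P, hPF, hP, hPab⟩ := ih _ (erase_ssubset hf) (hF.mono (erase_subset f F)) hfab
    refine ⟨P, hPF.trans (erase_subset f F), fun g hg hgab => hF f hf ?_, hPab⟩
    have hgf := hPF hg
    have hsplit : F.erase g = Insert.insert f ((F.erase f).erase g) := by
      rw [erase_right_comm, insert_erase (mem_erase.mpr ⟨(ne_of_mem_erase hgf).symm, hf⟩)]
    rw [hsplit] at hgab
    exact reachable_ends_of_reachable_insert hgab (hP g hg) (erase_subset g _) hfab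

end IsForest

section Exchange

variable [DecidableEq E] {F : Finset E} {u w : E}

theorem reachable_exchange_iff (hu : Reachable ends F (ends u).1 (ends u).2) (hw : w ∈ F)
    (hcut : ¬ Reachable ends (F.erase w) (ends u).1 (ends u).2) {a b : V} :
    Reachable ends (insert u (F.erase w)) a b ↔ Reachable ends F a b := by
  have hwu : Reachable ends (insert u (F.erase w)) (ends w).1 (ends w).2 :=
    reachable_ends_of_reachable_insert (by rwa [insert_erase hw]) hcut (subset_insert _ _)
      (.of_mem (mem_insert_self _ _))
  constructor
  · intro h
    rw [← reachable_insert_iff_of_reachable hu]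
    exact h.mono (insert_subset_insert u (erase_subset w F))
  · intro h
    rw [← reachable_insert_iff_of_reachable hwu, insert_comm, insert_erase hw]
    exact h.mono (subset_insert u F)

end Exchange

section Components

variable [Fintype V]

open Classical in
noncomputable def component (ends : E → V × V) (S : Finset E) (v : V) : Finset V :=
  univ.filter (Reachable ends S v)

variable {S T : Finset E} {a b : V}

theorem mem_component : b ∈ component ends S a ↔ Reachable ends S a b := by
  simp [component]

theorem mem_component_self : a ∈ component ends S a := mem_component.mpr (.refl a)

theorem component_eq_component_iff :
    component ends S a = component ends S b ↔ Reachable ends S a b := by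
  refine ⟨fun h => mem_component.mp (h ▸ mem_component_self), fun h => ?_⟩
  ext w
  simp only [mem_component]
  exact ⟨h.symm.trans, h.trans⟩

theorem sum_inv_card_component_eq_one (S : Finset E) (a : V) :
    ∑ v ∈ component ends S a, (#(component ends S v) : ℚ)⁻¹ = 1 := by
  have hconst : ∀ v ∈ component ends S a, component ends S v = component ends S a :=
    fun v hv => (component_eq_component_iff.mpr (mem_component.mp hv)).symm
  rw [sum_congr rfl fun v hv => by rw [hconst v hv], sum_const, nsmul_eq_mul]
  have : (#(component ends S a) : ℚ) ≠ 0 := by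
    exact_mod_cast (card_pos.mpr ⟨a, mem_component_self⟩).ne'
  field_simp

theorem component_eq_of_not_reachable [DecidableEq E] {F : Finset E} {e : E} (he : e ∈ F)
    (h₁ : ¬ Reachable ends (F.erase e) (ends e).1 a)
    (h₂ : ¬ Reachable ends (F.erase e) (ends e).2 a) :
    component ends F a = component ends (F.erase e) a := by
  ext w
  rw [mem_component, mem_component, ← insert_erase he, reachable_insert_iff, erase_insert_eq_erase,
    erase_idem]
  refine ⟨?_, Or.inl⟩
  rintro (h | ⟨h, -⟩ | ⟨h, -⟩)
  exacts [h, absurd h.symm h₁, absurd h.symm h₂]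

variable [DecidableEq V]

noncomputable def numComponents (ends : E → V × V) (S : Finset E) : ℕ :=
  #(univ.image (component ends S))

theorem numComponents_congr (h : ∀ a b, Reachable ends S a b ↔ Reachable ends T a b) :
    numComponents ends S = numComponents ends T := by
  have : component ends S = component ends T := by
    ext v w
    simp only [mem_component, h]
  rw [numComponents, this, numComponents]

theorem numComponents_pos [Nonempty V] : 0 < numComponents ends S :=
  card_pos.mpr (image_nonempty.mpr univ_nonempty)

theorem ConnOn.numComponents_le_one (h : ConnOn ends S) : numComponents ends S ≤ 1 := by
  refine card_le_one.mpr ?_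
  simp only [mem_image, mem_univ, true_and]
  rintro _ ⟨a, rfl⟩ _ ⟨b, rfl⟩
  exact component_eq_component_iff.mpr (h a b)

theorem connOn_of_numComponents_eq_one (h : numComponents ends S = 1) : ConnOn ends S := by
  obtain ⟨C, hC⟩ := card_eq_one.mp h
  have hv : ∀ v, component ends S v = C := fun v =>
    mem_singleton.mp (hC ▸ mem_image_of_mem _ (mem_univ v))
  exact fun a b => component_eq_component_iff.mp ((hv a).trans (hv b).symm)

theorem numComponents_empty : numComponents ends (∅ : Finset E) = Fintype.card V := by
  have hsingleton : ∀ v : V, component ends (∅ : Finset E) v = {v} := by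
    intro v
    ext w
    rw [mem_component, mem_singleton]
    refine ⟨fun h => ?_, by rintro rfl; exact .refl w⟩
    induction h with
    | refl => rfl
    | tail _ hstep => obtain ⟨e, he, _⟩ := hstep; exact absurd he (notMem_empty e)
  rw [numComponents, funext hsingleton, card_image_of_injective _ singleton_injective, card_univ]

/-- Counting components by summing `1 / |component|` over the vertices makes the count additive
under the splitting of vertex sets. -/
theorem sum_inv_card_component (S : Finset E) :
    ∑ v, (#(component ends S v) : ℚ)⁻¹ = numComponents ends S := by
  rw [← sum_fiberwise_of_maps_to (fun v _ => mem_image_of_mem (component ends S) (mem_univ v)),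
    numComponents, card_eq_sum_ones, Nat.cast_sum, Nat.cast_one]
  refine sum_congr rfl fun C hC => ?_
  obtain ⟨a, -, rfl⟩ := mem_image.mp hC
  have hfiber : univ.filter (fun v => component ends S v = component ends S a) =
      component ends S a := by
    ext v
    rw [mem_filter, mem_component, component_eq_component_iff]
    exact ⟨fun h => h.2.symm, fun h => ⟨mem_univ v, h.symm⟩⟩
  rw [hfiber, sum_inv_card_component_eq_one]

variable [DecidableEq E] {F : Finset E} {e : E}

theorem component_eq_union (he : e ∈ F) :
    component ends F (ends e).1 =
      component ends (F.erase e) (ends e).1 ∪ component ends (F.erase e) (ends e).2 := by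
  ext w
  have h := reachable_insert_iff (ends := ends) (S := F.erase e) (u := e) (a := (ends e).1)
    (b := w)
  have hrefl := Reachable.refl (ends := ends) (S := F.erase e) (ends e).1
  rw [insert_erase he] at h
  rw [mem_union, mem_component, mem_component, mem_component, h]
  tauto

theorem numComponents_erase_of_not_reachable (he : e ∈ F)
    (hcut : ¬ Reachable ends (F.erase e) (ends e).1 (ends e).2) :
    numComponents ends (F.erase e) = numComponents ends F + 1 := by
  set U := component ends F (ends e).1
  have hU : U = component ends (F.erase e) (ends e).1 ∪ component ends (F.erase e) (ends e).2 :=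
    component_eq_union he
  have hdisj : Disjoint (component ends (F.erase e) (ends e).1)
      (component ends (F.erase e) (ends e).2) := disjoint_left.mpr fun v hv₁ hv₂ =>
    hcut ((mem_component.mp hv₁).trans (mem_component.mp hv₂).symm)
  have hrest : ∀ v ∈ Uᶜ, (#(component ends F v) : ℚ)⁻¹ =
      (#(component ends (F.erase e) v) : ℚ)⁻¹ := by
    intro v hv
    simp only [mem_compl, hU, mem_union, mem_component, not_or] at hv
    rw [component_eq_of_not_reachable he hv.1 hv.2]
  have hF : (numComponents ends F : ℚ) =
      1 + ∑ v ∈ Uᶜ, (#(component ends (F.erase e) v) : ℚ)⁻¹ := by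
    rw [← sum_inv_card_component, ← sum_add_sum_compl U, sum_congr rfl hrest,
      sum_inv_card_component_eq_one]
  have hF' : (numComponents ends (F.erase e) : ℚ) =
      2 + ∑ v ∈ Uᶜ, (#(component ends (F.erase e) v) : ℚ)⁻¹ := by
    rw [← sum_inv_card_component, ← sum_add_sum_compl U, hU, sum_union hdisj,
      sum_inv_card_component_eq_one, sum_inv_card_component_eq_one, one_add_one_eq_two]
  exact_mod_cast (by linarith : (numComponents ends (F.erase e) : ℚ) = numComponents ends F + 1)

end Components

def crossing {ι : Type*} [DecidableEq ι] (ends : E → V × V) (S : Finset E) (c : V → ι) :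
    Finset E :=
  S.filter fun e => c (ends e).1 ≠ c (ends e).2

theorem Reachable.label_eq {ι : Type*} {S : Finset E} {a b : V} {c : V → ι}
    (hc : ∀ e ∈ S, c (ends e).1 = c (ends e).2) (h : Reachable ends S a b) : c a = c b := by
  induction h with
  | refl => rfl
  | tail _ hstep ih =>
    obtain ⟨e, he, hbc | hbc⟩ := hstep <;> have := hc e he <;> rw [hbc] at this
    exacts [ih.trans this, ih.trans this.symm]

section Counting

variable [Fintype V] [DecidableEq V]

theorem card_image_le_numComponents {ι : Type*} [DecidableEq ι] {S : Finset E} (c : V → ι)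
    (hc : ∀ e ∈ S, c (ends e).1 = c (ends e).2) : #(univ.image c) ≤ numComponents ends S := by
  refine card_le_card_of_forall_subsingleton' (fun C t => ∃ v, component ends S v = C ∧ c v = t)
    ?_ ?_
  · simp only [mem_image, mem_univ, true_and]
    rintro _ ⟨v, rfl⟩
    exact ⟨_, ⟨v, rfl⟩, v, rfl, rfl⟩
  · rintro C - t ⟨-, v, rfl, rfl⟩ t' ⟨-, w, hwv, rfl⟩
    exact Reachable.label_eq hc (component_eq_component_iff.mp hwv.symm)

variable [DecidableEq E]

theorem IsForest.card_add_numComponents {F : Finset E} (hF : IsForest ends F) :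
    #F + numComponents ends F = Fintype.card V := by
  induction F using Finset.strongInduction with
  | H F ih =>
    rcases F.eq_empty_or_nonempty with rfl | ⟨e, he⟩
    · rw [card_empty, numComponents_empty, zero_add]
    · have h := ih _ (erase_ssubset he) (hF.mono (erase_subset e F))
      rw [card_erase_of_mem he, numComponents_erase_of_not_reachable he (hF e he)] at h
      have := card_pos.mpr ⟨e, he⟩
      omega

theorem numComponents_le_numComponents_insert (S : Finset E) (u : E) :
    numComponents ends S ≤ numComponents ends (insert u S) + 1 := by
  by_cases hu : Reachable ends S (ends u).1 (ends u).2
  · rw [numComponents_congr fun a b => reachable_insert_iff_of_reachable hu]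
    omega
  · have huS : u ∉ S := fun h => hu (.of_mem h)
    have h := numComponents_erase_of_not_reachable (mem_insert_self u S) (by rwa [erase_insert huS])
    rw [erase_insert huS] at h
    omega

theorem numComponents_le_numComponents_union (S D : Finset E) :
    numComponents ends S ≤ numComponents ends (S ∪ D) + #D := by
  induction D using Finset.induction_on with
  | empty => simp
  | insert u D hu ih =>
    rw [union_insert, card_insert_of_notMem hu]
    have := numComponents_le_numComponents_insert (ends := ends) (S ∪ D) u
    omega

theorem ConnOn.card_image_le_card_crossing_add_one {T : Finset E} (hT : ConnOn ends T)
    {ι : Type*} [DecidableEq ι] (c : V → ι) : #(univ.image c) ≤ #(crossing ends T c) + 1 := by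
  set N := T.filter fun e => c (ends e).1 = c (ends e).2
  have hT' : N ∪ crossing ends T c = T := filter_union_filter_not_eq _ _
  calc #(univ.image c) ≤ numComponents ends N :=
        card_image_le_numComponents c fun e he => (mem_filter.mp he).2
    _ ≤ numComponents ends (N ∪ crossing ends T c) + #(crossing ends T c) :=
        numComponents_le_numComponents_union _ _
    _ ≤ #(crossing ends T c) + 1 := by
        rw [hT']
        have := hT.numComponents_le_one
        omega

end Counting

section PartitionCondition

variable [Fintype V] [DecidableEq V]

/-- The Nash-Williams–Tutte condition. A partition of `V` is given by the fibres of a labelling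
`c`; labels are taken in `Finset V` so that a partition can be labelled by its parts. -/
def PartitionCondition (ends : E → V × V) (m : ℕ) (S : Finset E) : Prop :=
  ∀ c : V → Finset V, m * (#(univ.image c) - 1) ≤ #(crossing ends S c)

theorem TreeConnOn.partitionCondition [DecidableEq E] {m : ℕ} {S : Finset E}
    (h : TreeConnOn ends m S) : PartitionCondition ends m S := by
  obtain ⟨T, hT, hdisj⟩ := h
  intro c
  calc m * (#(univ.image c) - 1) = ∑ _i : Fin m, (#(univ.image c) - 1) := by simp
    _ ≤ ∑ i, #(crossing ends (T i) c) :=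
        sum_le_sum fun i _ => by have := (hT i).2.1.card_image_le_card_crossing_add_one c; omega
    _ = #(univ.biUnion fun i => crossing ends (T i) c) :=
        (card_biUnion fun i _ j _ hij => disjoint_filter_filter (hdisj i j hij)).symm
    _ ≤ #(crossing ends S c) :=
        card_le_card (biUnion_subset.mpr fun i _ => filter_subset_filter _ (hT i).1)

/-- Each crossing edge lies in the cuts of exactly two parts. -/
theorem sum_card_cut_fiber {ι : Type*} [DecidableEq ι] (S : Finset E) (c : V → ι) :
    ∑ t ∈ univ.image c, #(cut ends S (univ.filter fun v => c v = t)) =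
      2 * #(crossing ends S c) := by
  have hends : ∀ e, #((univ.image c).filter fun t => ¬ (c (ends e).1 = t ↔ c (ends e).2 = t)) =
      if c (ends e).1 ≠ c (ends e).2 then 2 else 0 := by
    intro e
    split_ifs with hne
    · rw [← card_pair hne]
      congr 1
      ext t
      simp only [mem_filter, mem_image, mem_univ, true_and, mem_insert, mem_singleton]
      constructor
      · rintro ⟨-, h⟩
        by_contra! h'
        exact h (iff_of_false (Ne.symm h'.1) (Ne.symm h'.2))
      · rintro (rfl | rfl)
        · exact ⟨⟨_, rfl⟩, by simpa using Ne.symm hne⟩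
        · exact ⟨⟨_, rfl⟩, by simpa using hne⟩
    · rw [card_eq_zero, filter_eq_empty_iff]
      push Not at hne
      simp [hne]
  calc ∑ t ∈ univ.image c, #(cut ends S (univ.filter fun v => c v = t))
      = ∑ t ∈ univ.image c, ∑ e ∈ S,
          if ¬ (c (ends e).1 = t ↔ c (ends e).2 = t) then 1 else 0 := by
        simp only [cut, mem_filter, mem_univ, true_and, card_filter]
    _ = ∑ e ∈ S, if c (ends e).1 ≠ c (ends e).2 then 2 else 0 := by
        rw [sum_comm]
        exact sum_congr rfl fun e _ => by rw [← hends, card_filter]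
    _ = 2 * #(crossing ends S c) := by
        rw [crossing, card_filter, mul_sum]
        exact sum_congr rfl fun e _ => by split_ifs <;> rfl

end PartitionCondition

section MaxCut

variable [DecidableEq V] [DecidableEq E]

theorem cut_symmDiff (S : Finset E) (X A : Finset V) :
    cut ends S (symmDiff X A) = symmDiff (cut ends S X) (cut ends S A) := by
  ext e
  simp only [cut, mem_filter, mem_symmDiff]
  tauto

theorem cut_cut (S : Finset E) (X A : Finset V) :
    cut ends (cut ends S X) A = cut ends S X ∩ cut ends S A := by
  ext e
  simp only [cut, mem_filter, mem_inter]
  tauto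

/-- For a maximum cut `X`, flipping the side of `A` does not enlarge the cut. -/
theorem card_cut_le_two_mul_card_cut_cut {S : Finset E} {X : Finset V}
    (hX : ∀ Y, #(cut ends S Y) ≤ #(cut ends S X)) (A : Finset V) :
    #(cut ends S A) ≤ 2 * #(cut ends (cut ends S X) A) := by
  have h := hX (symmDiff X A)
  rw [cut_symmDiff, symmDiff_def, sup_eq_union, card_union_of_disjoint disjoint_sdiff_sdiff] at h
  have h₁ := card_sdiff_add_card_inter (cut ends S X) (cut ends S A)
  have h₂ := card_sdiff_add_card_inter (cut ends S A) (cut ends S X)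
  rw [inter_comm] at h₂
  rw [cut_cut]
  omega

theorem PartitionCondition.cut_of_forall_card_cut_le [Fintype V] {m : ℕ} {S : Finset E}
    {X : Finset V}
    (h : PartitionCondition ends (2 * m) S) (hX : ∀ Y, #(cut ends S Y) ≤ #(cut ends S X)) :
    PartitionCondition ends m (cut ends S X) := by
  intro c
  have hG := sum_card_cut_fiber (ends := ends) S c
  have hH := sum_card_cut_fiber (ends := ends) (cut ends S X) c
  have hle : ∑ t ∈ univ.image c, #(cut ends S (univ.filter fun v => c v = t)) ≤
      2 * ∑ t ∈ univ.image c, #(cut ends (cut ends S X) (univ.filter fun v => c v = t)) := by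
    rw [mul_sum]
    exact sum_le_sum fun t _ => card_cut_le_two_mul_card_cut_cut hX _
  have hc := h c
  rw [mul_assoc] at hc
  omega

end MaxCut

section Chains

variable {α : Type*}

theorem exists_eq_append_cons_append_cons_of_not_nodup {L : List α} (h : ¬ L.Nodup) :
    ∃ a l₁ l₂ l₃, L = l₁ ++ a :: (l₂ ++ a :: l₃) := by
  induction L with
  | nil => exact absurd List.nodup_nil h
  | cons b L ih =>
    by_cases hb : b ∈ L
    · obtain ⟨l₂, l₃, rfl⟩ := List.append_of_mem hb
      exact ⟨b, [], l₂, l₃, rfl⟩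
    · obtain ⟨a, l₁, l₂, l₃, rfl⟩ := ih fun hL => h (List.nodup_cons.mpr ⟨hb, hL⟩)
      exact ⟨a, b :: l₁, l₂, l₃, rfl⟩

theorem exists_shorter_isChain_of_not_nodup {R : α → α → Prop} {L : List α}
    (hL : L.IsChain R) (hnd : ¬ L.Nodup) :
    ∃ L' : List α, L'.length < L.length ∧ L'.IsChain R ∧ L'.head? = L.head? ∧
      L'.getLast? = L.getLast? := by
  obtain ⟨a, l₁, l₂, l₃, rfl⟩ := exists_eq_append_cons_append_cons_of_not_nodup hnd
  rw [List.isChain_split] at hL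
  have h₃ : (a :: l₃).IsChain R := (List.isChain_cons_split.mp hL.2).2
  refine ⟨l₁ ++ a :: l₃, by simp, List.isChain_split.mpr ⟨hL.1, h₃⟩, by simp, ?_⟩
  rw [List.getLast?_append, List.getLast?_append]
  congr 1
  rw [show a :: (l₂ ++ a :: l₃) = (a :: l₂) ++ (a :: l₃) from rfl, List.getLast?_append]
  cases h : (a :: l₃).getLast? <;> simp_all

end Chains

section Packing

open Function

variable {m : ℕ}

theorem sum_card_update (F : Fin m → Finset E) (j : Fin m) (s : Finset E) :
    ∑ i, #(update F j s i) + #(F j) = ∑ i, #(F i) + #s := by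
  have h : (fun i => #(update F j s i)) = update (fun i => #(F i)) j #s :=
    funext (apply_update (fun _ => card) F j s)
  rw [h, sum_update_of_mem (mem_univ j), ← add_sum_erase univ _ (mem_univ j),
    sdiff_singleton_eq_erase]
  ring

variable [DecidableEq E]

def IsForestPacking (ends : E → V × V) (S : Finset E) (F : Fin m → Finset E) : Prop :=
  (∀ i, F i ⊆ S ∧ IsForest ends (F i)) ∧ Pairwise (Disjoint on F)

def CanAdd (ends : E → V × V) (F : Fin m → Finset E) (e : E) : Prop :=
  ∃ j, e ∉ F j ∧ ¬ Reachable ends (F j) (ends e).1 (ends e).2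

/-- `f` lies on the path of some forest `F j` between the ends of `e`, so that `e` may replace
`f` in `F j`. -/
def CanReplace (ends : E → V × V) (F : Fin m → Finset E) (e f : E) : Prop :=
  ∃ j, f ∈ F j ∧ e ∉ F j ∧ Reachable ends (F j) (ends e).1 (ends e).2 ∧
    ¬ Reachable ends ((F j).erase f) (ends e).1 (ends e).2

def exchange (F : Fin m → Finset E) (j : Fin m) (u f : E) : Fin m → Finset E :=
  update F j (insert u ((F j).erase f))

variable {S : Finset E} {F : Fin m → Finset E}

theorem pairwise_disjoint_update (hF : Pairwise (Disjoint on F)) {j : Fin m} {u : E}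
    {s : Finset E} (hs : s ⊆ insert u (F j)) (hu : ∀ i, u ∉ F i) :
    Pairwise (Disjoint on update F j s) := by
  have hsj : ∀ i ≠ j, Disjoint s (F i) := fun i hij =>
    disjoint_of_subset_left hs (disjoint_insert_left.mpr ⟨hu i, hF (Ne.symm hij)⟩)
  intro i i' hii'
  by_cases hi : i = j <;> by_cases hi' : i' = j
  · exact absurd (hi.trans hi'.symm) hii'
  · subst hi
    simpa [onFun, hi'] using hsj i' hi'
  · subst hi'
    simpa [onFun, hi] using (hsj i hi).symm
  · simpa [onFun, hi, hi'] using hF hii'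

theorem IsForestPacking.exists_of_canAdd (hF : IsForestPacking ends S F) {u : E} (huS : u ∈ S)
    (hu : ∀ i, u ∉ F i) (hadd : CanAdd ends F u) :
    ∃ F' : Fin m → Finset E, IsForestPacking ends S F' ∧ ∑ i, #(F' i) = ∑ i, #(F i) + 1 := by
  obtain ⟨j, -, hj⟩ := hadd
  refine ⟨update F j (insert u (F j)), ⟨fun i => ?_, ?_⟩, ?_⟩
  · rcases eq_or_ne i j with rfl | hij
    · rw [update_self]
      exact ⟨insert_subset huS (hF.1 i).1, (hF.1 i).2.insert hj⟩
    · rw [update_of_ne hij]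
      exact hF.1 i
  · exact pairwise_disjoint_update hF.2 subset_rfl hu
  · have := sum_card_update F j (insert u (F j))
    rw [card_insert_of_notMem (hu j)] at this
    omega

/-- If replacing `e₁` by `u` spoils the exchange of `g` for `f`, then `e₁` may replace `f`
afterwards. -/
theorem not_reachable_erase_of_exchange {F : Finset E} {u e₁ f g : E} (hF : IsForest ends F)
    (he₁ : e₁ ∈ F) (hfu : f ≠ u) (hfe₁ : f ≠ e₁)
    (hg : ¬ Reachable ends (F.erase f) (ends g).1 (ends g).2)
    (hbroken : Reachable ends ((insert u (F.erase e₁)).erase f) (ends g).1 (ends g).2) :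
    ¬ Reachable ends ((insert u (F.erase e₁)).erase f) (ends e₁).1 (ends e₁).2 := by
  rw [erase_insert_of_ne hfu.symm, erase_right_comm] at hbroken ⊢
  intro he₁f
  have hu : Reachable ends (F.erase f) (ends u).1 (ends u).2 :=
    reachable_ends_of_reachable_insert he₁f
      (fun h => hF e₁ he₁ (h.mono (erase_subset_erase e₁ (erase_subset f F))))
      (erase_subset e₁ _) (.of_mem (mem_erase.mpr ⟨hfe₁.symm, he₁⟩))
  exact hg ((reachable_insert_iff_of_reachable hu).mp
    (hbroken.mono (insert_subset_insert u (erase_subset e₁ _))))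

section Exchange

variable {i₁ : Fin m} {u e₁ : E}

theorem exchange_self : exchange F i₁ u e₁ i₁ = insert u ((F i₁).erase e₁) := update_self ..

theorem exchange_of_ne {i : Fin m} (hi : i ≠ i₁) : exchange F i₁ u e₁ i = F i := update_of_ne hi ..

theorem IsForestPacking.exchange (hF : IsForestPacking ends S F) (huS : u ∈ S)
    (hu : ∀ i, u ∉ F i) (hcut : ¬ Reachable ends ((F i₁).erase e₁) (ends u).1 (ends u).2) :
    IsForestPacking ends S (exchange F i₁ u e₁) := by
  refine ⟨fun i => ?_, pairwise_disjoint_update hF.2 (insert_subset_insert u (erase_subset _ _)) hu⟩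
  rcases eq_or_ne i i₁ with rfl | hi
  · rw [exchange_self]
    exact ⟨insert_subset huS ((erase_subset _ _).trans (hF.1 i).1),
      ((hF.1 i).2.mono (erase_subset _ _)).insert hcut⟩
  · rw [exchange_of_ne hi]
    exact hF.1 i

theorem sum_card_exchange (hu : u ∉ F i₁) (he₁ : e₁ ∈ F i₁) :
    ∑ i, #(exchange F i₁ u e₁ i) = ∑ i, #(F i) := by
  have h := sum_card_update F i₁ (insert u ((F i₁).erase e₁))
  rw [card_insert_of_notMem (fun h => hu (mem_of_mem_erase h)), card_erase_of_mem he₁] at h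
  have := card_pos.mpr ⟨e₁, he₁⟩
  unfold exchange
  omega

theorem notMem_exchange (hF : Pairwise (Disjoint on F)) (he₁ : e₁ ∈ F i₁) (hue₁ : u ≠ e₁)
    (i : Fin m) : e₁ ∉ exchange F i₁ u e₁ i := by
  rcases eq_or_ne i i₁ with rfl | hi
  · rw [exchange_self, mem_insert, not_or]
    exact ⟨hue₁.symm, notMem_erase e₁ _⟩
  · rw [exchange_of_ne hi]
    exact disjoint_left.mp (hF hi.symm) he₁

theorem reachable_exchange_self_iff (he₁ : e₁ ∈ F i₁)
    (hconn : Reachable ends (F i₁) (ends u).1 (ends u).2)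
    (hcut : ¬ Reachable ends ((F i₁).erase e₁) (ends u).1 (ends u).2) {a b : V} :
    Reachable ends (exchange F i₁ u e₁ i₁) a b ↔ Reachable ends (F i₁) a b := by
  rw [exchange_self]
  exact reachable_exchange_iff hconn he₁ hcut

theorem CanAdd.exchange (he₁ : e₁ ∈ F i₁)
    (hconn : Reachable ends (F i₁) (ends u).1 (ends u).2)
    (hcut : ¬ Reachable ends ((F i₁).erase e₁) (ends u).1 (ends u).2) {e : E}
    (h : CanAdd ends F e) (heu : e ≠ u) :
    CanAdd ends (exchange F i₁ u e₁) e := by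
  obtain ⟨j, hej, hj⟩ := h
  refine ⟨j, ?_, ?_⟩ <;> rcases eq_or_ne j i₁ with rfl | hji
  · rw [exchange_self, mem_insert, not_or]
    exact ⟨heu, fun h => hej (mem_of_mem_erase h)⟩
  · rwa [exchange_of_ne hji]
  · rwa [reachable_exchange_self_iff he₁ hconn hcut]
  · rwa [exchange_of_ne hji]

theorem CanReplace.exchange (he₁ : e₁ ∈ F i₁)
    (hconn : Reachable ends (F i₁) (ends u).1 (ends u).2)
    (hcut : ¬ Reachable ends ((F i₁).erase e₁) (ends u).1 (ends u).2)
    (hF : IsForest ends (F i₁)) (hu : u ∉ F i₁) {g f : E}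
    (h : CanReplace ends F g f) (hgu : g ≠ u) (hfe₁ : f ≠ e₁) :
    CanReplace ends (exchange F i₁ u e₁) g f ∨ CanReplace ends (exchange F i₁ u e₁) e₁ f := by
  obtain ⟨j, hfj, hgj, hconng, hcutg⟩ := h
  rcases eq_or_ne j i₁ with rfl | hji
  · have hfG : f ∈ exchange F j u e₁ j := by
      rw [exchange_self]
      exact mem_insert_of_mem (mem_erase.mpr ⟨hfe₁, hfj⟩)
    by_cases hbroken : Reachable ends ((exchange F j u e₁ j).erase f) (ends g).1 (ends g).2
    · refine Or.inr ⟨j, hfG, ?_, (reachable_exchange_self_iff he₁ hconn hcut).mpr (.of_mem he₁), ?_⟩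
      · rw [exchange_self, mem_insert, not_or]
        exact ⟨ne_of_mem_of_not_mem he₁ hu, notMem_erase e₁ _⟩
      · rw [exchange_self] at hbroken ⊢
        exact not_reachable_erase_of_exchange hF he₁ (ne_of_mem_of_not_mem hfj hu) hfe₁ hcutg
          hbroken
    · refine Or.inl ⟨j, hfG, ?_, (reachable_exchange_self_iff he₁ hconn hcut).mpr hconng, hbroken⟩
      rw [exchange_self, mem_insert, not_or]
      exact ⟨hgu, fun h => hgj (mem_of_mem_erase h)⟩
  · refine Or.inl ⟨j, ?_⟩
    rw [exchange_of_ne hji]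
    exact ⟨hfj, hgj, hconng, hcutg⟩

theorem exists_isChain_exchange (he₁ : e₁ ∈ F i₁)
    (hconn : Reachable ends (F i₁) (ends u).1 (ends u).2)
    (hcut : ¬ Reachable ends ((F i₁).erase e₁) (ends u).1 (ends u).2)
    (hF : IsForest ends (F i₁)) (hu : u ∉ F i₁) {g : E} {l : List E}
    (hc : (g :: l).IsChain (CanReplace ends F)) (hadd : CanAdd ends F (l.getLastD g))
    (hgu : g ≠ u) (hul : u ∉ l) (he₁l : e₁ ∉ l) :
    ∃ h l', (h = g ∨ h = e₁) ∧ (h :: l').IsChain (CanReplace ends (exchange F i₁ u e₁)) ∧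
      CanAdd ends (exchange F i₁ u e₁) (l'.getLastD h) ∧ l'.length ≤ l.length := by
  induction l generalizing g with
  | nil => exact ⟨g, [], Or.inl rfl, .singleton g, hadd.exchange he₁ hconn hcut hgu, le_rfl⟩
  | cons f l ih =>
    obtain ⟨harc, hc⟩ := List.isChain_cons_cons.mp hc
    rw [List.getLastD_cons] at hadd
    rw [List.mem_cons, not_or] at hul he₁l
    obtain ⟨h, l', hh, hc', hadd', hlen⟩ :=
      ih hc hadd (Ne.symm hul.1) hul.2 he₁l.2
    rcases hh with rfl | rfl
    · have hlen' : (h :: l').length ≤ (h :: l).length := by simpa using hlen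
      rcases harc.exchange he₁ hconn hcut hF hu hgu (Ne.symm he₁l.1) with harc' | harc'
      · exact ⟨g, h :: l', Or.inl rfl, List.isChain_cons_cons.mpr ⟨harc', hc'⟩,
          by rwa [List.getLastD_cons], hlen'⟩
      · exact ⟨e₁, h :: l', Or.inr rfl, List.isChain_cons_cons.mpr ⟨harc', hc'⟩,
          by rwa [List.getLastD_cons], hlen'⟩
    · exact ⟨h, l', Or.inr rfl, hc', hadd', hlen.trans (by simp)⟩

end Exchange

/-- A chain with a repetition can be shortened, and after the first exchange of a chain without
one, the rest of it leaves a shorter chain for the new packing. -/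
theorem IsForestPacking.exists_of_isChain (hF : IsForestPacking ends S F) {u : E} (huS : u ∈ S)
    (hu : ∀ i, u ∉ F i) {l : List E} (hc : (u :: l).IsChain (CanReplace ends F))
    (hadd : CanAdd ends F (l.getLastD u)) :
    ∃ F' : Fin m → Finset E, IsForestPacking ends S F' ∧ ∑ i, #(F' i) = ∑ i, #(F i) + 1 := by
  induction hn : l.length using Nat.strong_induction_on generalizing F u l with
  | _ n ih =>
    by_cases hnd : (u :: l).Nodup
    · cases l with
      | nil => exact hF.exists_of_canAdd huS hu hadd
      | cons e₁ l =>
        obtain ⟨⟨i₁, he₁, hu₁, hconn, hcut⟩, hc⟩ := List.isChain_cons_cons.mp hc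
        rw [List.getLastD_cons] at hadd
        rw [List.nodup_cons, List.nodup_cons, List.mem_cons, not_or] at hnd
        obtain ⟨h, l', hh, hc', hadd', hlen⟩ := exists_isChain_exchange he₁ hconn hcut
          (hF.1 i₁).2 hu₁ hc hadd (Ne.symm hnd.1.1) hnd.1.2 hnd.2.1
        obtain rfl : h = e₁ := hh.elim id id
        obtain ⟨F', hF', hsum⟩ := ih l'.length (by simp at hn; omega) (hF.exchange huS hu hcut)
          ((hF.1 i₁).1 he₁) (notMem_exchange hF.2 he₁ hnd.1.1) hc' hadd' rfl
        exact ⟨F', hF', by rw [hsum, sum_card_exchange hu₁ he₁]⟩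
    · obtain ⟨L, hlen, hcL, hhead, hlast⟩ := exists_shorter_isChain_of_not_nodup hc hnd
      obtain ⟨l', rfl⟩ : ∃ l', L = u :: l' := by
        cases L with
        | nil => simp at hhead
        | cons a l' => exact ⟨l', by simpa using hhead⟩
      have hlast' : l'.getLastD u = l.getLastD u := by
        rw [List.getLast?_cons, List.getLast?_cons, Option.some.injEq] at hlast
        rwa [List.getLastD_eq_getLast?, List.getLastD_eq_getLast?]
      exact ih l'.length (by simp at hlen; omega) hF huS hu hcL (hlast' ▸ hadd) rfl

theorem reachable_inter_of_closed {R : Finset E} (hF : ∀ i, IsForest ends (F i))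
    (hclosed : ∀ e ∈ R, ∀ f, CanReplace ends F e f → f ∈ R) (hadd : ∀ e ∈ R, ¬ CanAdd ends F e)
    {e : E} (he : e ∈ R) (i : Fin m) : Reachable ends (F i ∩ R) (ends e).1 (ends e).2 := by
  by_cases hei : e ∈ F i
  · exact .of_mem (mem_inter.mpr ⟨hei, he⟩)
  have hconn : Reachable ends (F i) (ends e).1 (ends e).2 := by
    by_contra h
    exact hadd e he ⟨i, hei, h⟩
  obtain ⟨P, hPF, hP, hPe⟩ := (hF i).exists_separating_path hconn
  exact hPe.mono fun f hf =>
    mem_inter.mpr ⟨hPF hf, hclosed e he f ⟨i, hPF hf, hei, hconn, hP f hf⟩⟩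

variable [Fintype V] [DecidableEq V] [Nonempty V]

/-- The components of `F i ∩ R`, the same for every `i`, form a partition whose crossing edges
all lie in `⋃ i, F i \ R`. -/
theorem IsForestPacking.le_sum_card (hF : IsForestPacking ends S F)
    (hcond : PartitionCondition ends m S) {R : Finset E}
    (hR : ∀ e ∈ R, ∀ i, Reachable ends (F i ∩ R) (ends e).1 (ends e).2)
    (hcover : ∀ e ∈ S, (∀ i, e ∉ F i) → e ∈ R) :
    m * (Fintype.card V - 1) ≤ ∑ i, #(F i) := by
  rcases Nat.eq_zero_or_pos m with rfl | hm
  · simp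
  set i₀ : Fin m := ⟨0, hm⟩
  set c := component ends (F i₀ ∩ R)
  have hcard : ∀ i, #(F i ∩ R) + #(univ.image c) = Fintype.card V := fun i => by
    rw [← ((hF.1 i).2.mono inter_subset_left).card_add_numComponents]
    congr 1
    exact numComponents_congr fun a b =>
      ⟨.of_forall_mem fun e he => hR e (mem_inter.mp he).2 i,
        .of_forall_mem fun e he => hR e (mem_inter.mp he).2 i₀⟩
  have hcross : crossing ends S c ⊆ univ.biUnion fun i => F i \ R := by
    intro e he
    obtain ⟨heS, hne⟩ := mem_filter.mp he
    have heR : e ∉ R := fun heR => hne (component_eq_component_iff.mpr (hR e heR i₀))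
    obtain ⟨i, hi⟩ : ∃ i, e ∈ F i := by
      by_contra! h
      exact heR (hcover e heS h)
    exact mem_biUnion.mpr ⟨i, mem_univ i, mem_sdiff.mpr ⟨hi, heR⟩⟩
  have hsplit : ∀ i, #(F i) = (Fintype.card V - #(univ.image c)) + #(F i \ R) := fun i => by
    have := hcard i
    have := card_inter_add_card_sdiff (F i) R
    omega
  have hk : 1 ≤ #(univ.image c) := numComponents_pos
  calc m * (Fintype.card V - 1)
      = m * (#(univ.image c) - 1) + m * (Fintype.card V - #(univ.image c)) := by
        rw [← mul_add]
        have := hcard i₀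
        congr 1
        omega
    _ ≤ ∑ i, #(F i \ R) + m * (Fintype.card V - #(univ.image c)) :=
        Nat.add_le_add_right ((hcond c).trans ((card_le_card hcross).trans card_biUnion_le)) _
    _ = ∑ i, #(F i) := by
        rw [sum_congr rfl fun i _ => hsplit i, sum_add_distrib, sum_const, card_univ,
          Fintype.card_fin, smul_eq_mul]
        ring

/-- If no chain of exchanges starting at an unused edge ends in an addable edge, the edges reached
by such chains span the same components in every forest of the packing. -/
theorem IsForestPacking.exists_of_sum_card_lt [Fintype E] (hF : IsForestPacking ends S F)
    (hcond : PartitionCondition ends m S) (hlt : ∑ i, #(F i) < m * (Fintype.card V - 1)) :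
    ∃ F' : Fin m → Finset E, IsForestPacking ends S F' ∧ ∑ i, #(F' i) = ∑ i, #(F i) + 1 := by
  classical
  by_contra hno
  let R := univ.filter fun e =>
    ∃ u ∈ S, (∀ i, u ∉ F i) ∧ Relation.ReflTransGen (CanReplace ends F) u e
  have hmem : ∀ e, e ∈ R ↔
      ∃ u ∈ S, (∀ i, u ∉ F i) ∧ Relation.ReflTransGen (CanReplace ends F) u e := by
    simp [R]
  have hadd : ∀ e ∈ R, ¬ CanAdd ends F e := by
    intro e he hadd
    obtain ⟨u, huS, hu, hue⟩ := (hmem e).mp he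
    obtain ⟨l, hc, hlast⟩ := List.exists_isChain_cons_of_relationReflTransGen hue
    rw [List.getLast_eq_getLastD] at hlast
    exact hno (hF.exists_of_isChain huS hu hc (hlast ▸ hadd))
  have hclosed : ∀ e ∈ R, ∀ f, CanReplace ends F e f → f ∈ R := by
    intro e he f hef
    obtain ⟨u, huS, hu, hue⟩ := (hmem e).mp he
    exact (hmem f).mpr ⟨u, huS, hu, hue.tail hef⟩
  have := hF.le_sum_card hcond
    (fun e he => reachable_inter_of_closed (fun i => (hF.1 i).2) hclosed hadd he)
    (fun e heS he => (hmem e).mpr ⟨e, heS, he, .refl⟩)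
  omega

theorem PartitionCondition.treeConnOn [Fintype E] (h : PartitionCondition ends m S) :
    TreeConnOn ends m S := by
  have hexists : ∀ d ≤ m * (Fintype.card V - 1),
      ∃ F : Fin m → Finset E, IsForestPacking ends S F ∧ ∑ i, #(F i) = d := by
    intro d hd
    induction d with
    | zero =>
      exact ⟨fun _ => ∅, ⟨fun _ => ⟨empty_subset S, fun e he => absurd he (notMem_empty e)⟩,
        fun _ _ _ => disjoint_empty_left _⟩, by simp⟩
    | succ d ih =>
      obtain ⟨F, hF, rfl⟩ := ih (by omega)
      exact hF.exists_of_sum_card_lt h (by omega)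
  obtain ⟨F, hF, hsum⟩ := hexists _ le_rfl
  have hV := Fintype.card_pos (α := V)
  have hforest := fun i => (hF.1 i).2.card_add_numComponents
  have hle : ∀ i ∈ univ, #(F i) ≤ Fintype.card V - 1 := fun i _ => by
    have := numComponents_pos (ends := ends) (S := F i)
    have := hforest i
    omega
  have heq := (sum_eq_sum_iff_of_le hle).mp (by simp [hsum])
  refine ⟨F, fun i => ⟨(hF.1 i).1, connOn_of_numComponents_eq_one ?_, ?_⟩, fun i j hij => hF.2 hij⟩
  · have := hforest i
    have := heq i (mem_univ i)
    omega
  · have := heq i (mem_univ i)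
    omega

end Packing

end MG

open MG Finset

theorem stmt10_general {V E : Type} [Fintype V] [Fintype E] [DecidableEq V] [DecidableEq E]
    (ends : E → V × V) (m : ℕ)
    (htc : TreeConnOn ends (2 * m) Finset.univ) :
    ∃ H : Finset E, BipOn ends H ∧ TreeConnOn ends m H ∧
      ∀ A : Finset V, ((cut ends Finset.univ A).card + 1) / 2 ≤ (cut ends H A).card := by
  obtain ⟨X, -, hX⟩ := exists_max_image univ (fun Y => #(cut ends univ Y)) univ_nonempty
  have hmax : ∀ Y, #(cut ends univ Y) ≤ #(cut ends univ X) := fun Y => hX Y (mem_univ Y)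
  refine ⟨cut ends univ X, ⟨X, fun e he => (mem_filter.mp he).2⟩, ?_, fun A => ?_⟩
  · rcases Nat.eq_zero_or_pos m with rfl | hm
    · exact ⟨fun i => i.elim0, fun i => i.elim0, fun i _ _ => i.elim0⟩
    have : Nonempty V := by
      obtain ⟨T, hT, -⟩ := htc
      exact Fintype.card_pos_iff.mp (by have := (hT ⟨0, by omega⟩).2.2; omega)
    exact (htc.partitionCondition.cut_of_forall_card_cut_le hmax).treeConnOn
  · have := card_cut_le_two_mul_card_cut_cut hmax A
    omega

theorem stmt10 {V E : Type} [Fintype V] [Fintype E] [DecidableEq V] [DecidableEq E]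
    (ends : E → V × V) (m : ℕ)
    (hloopless : ∀ e : E, (ends e).1 ≠ (ends e).2)
    (htc : TreeConnOn ends (2 * m) Finset.univ) :
    ∃ H : Finset E, BipOn ends H ∧ TreeConnOn ends m H ∧
      ∀ A : Finset V, ((cut ends Finset.univ A).card + 1) / 2 ≤ (cut ends H A).card :=
  stmt10_general ends m htc
end

section
/- Every 2k-tree-connected multigraph G with bi(G) ≥ k contains a subgraph H of maximum degree at most 2k with bi(H) ≥ k. -/
namespace MG

open Finset

variable {V E : Type} [DecidableEq V] (ends : E → V × V)

theorem cut_compl [Fintype V] (S : Finset E) (A : Finset V) : cut ends S Aᶜ = cut ends S A := by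
  ext e
  simp only [cut, mem_filter, mem_compl]
  tauto

theorem card_cut_union_add_card_cut_inter_le (S : Finset E) (A B : Finset V) :
    (cut ends S (A ∪ B)).card + (cut ends S (A ∩ B)).card ≤
      (cut ends S A).card + (cut ends S B).card := by
  simp only [cut, card_filter, ← sum_add_distrib]
  refine sum_le_sum fun e _ => ?_
  simp only [mem_union, mem_inter]
  split_ifs <;> simp_all

theorem sum_deg_eq (S : Finset E) (A : Finset V) :
    ∑ w ∈ A, deg ends S w = (cut ends S A).card + 2 * (inside ends S A).card := by
  simp only [deg, cut, inside, card_filter, mul_sum, ← sum_add_distrib]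
  rw [sum_comm]
  refine sum_congr rfl fun e _ => ?_
  simp only [sum_add_distrib, sum_ite_eq]
  split_ifs <;> simp_all

theorem sum_deg_univ [Fintype V] (S : Finset E) : ∑ w, deg ends S w = 2 * S.card := by
  rw [sum_deg_eq]
  simp [cut, inside]

theorem deg_bad_add_deg_cut (S : Finset E) (Y : Finset V) (v : V) :
    deg ends (bad ends S Y) v + deg ends (cut ends S Y) v = deg ends S v := by
  simp only [deg, bad, cut, filter_filter, card_filter, ← sum_add_distrib]
  refine sum_congr rfl fun e _ => ?_
  split_ifs <;> simp_all

theorem card_bad_add_card_cut_symmDiff (S : Finset E) (X Y : Finset V) :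
    (bad ends S X).card + (cut ends (bad ends S Y) (symmDiff X Y)).card =
      (bad ends S Y).card + (cut ends (cut ends S Y) (symmDiff X Y)).card := by
  simp only [bad, cut, filter_filter, card_filter, ← sum_add_distrib]
  refine sum_congr rfl fun e _ => ?_
  simp only [mem_symmDiff]
  split_ifs <;> simp_all <;> tauto

/- `|δ_C| - |δ_D|` is not submodular, but `∑_{w ∈ W} deg_D(w) = |δ_D(W)| + 2|D[W]|` and the
term `|D[W]|` is monotone in `W`, which is enough to pass to unions of tight sets. -/
theorem card_cut_union_le_sum_deg {C D : Finset E} {U W : Finset V}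
    (hW : (cut ends C W).card ≤ ∑ w ∈ W, deg ends D w)
    (hU : (cut ends C U).card ≤ (cut ends D U).card)
    (hUW : (cut ends D (U ∩ W)).card ≤ (cut ends C (U ∩ W)).card) :
    (cut ends C (U ∪ W)).card ≤ ∑ w ∈ U ∪ W, deg ends D w := by
  have hsub := card_cut_union_add_card_cut_inter_le ends C U W
  have hsum : ∑ w ∈ U ∪ W, deg ends D w + ∑ w ∈ U ∩ W, deg ends D w =
      ∑ w ∈ U, deg ends D w + ∑ w ∈ W, deg ends D w := sum_union_inter
  have hinside : (inside ends D (U ∩ W)).card ≤ (inside ends D U).card :=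
    card_le_card <| monotone_filter_right _ fun _ _ he =>
      ⟨mem_of_mem_inter_left he.1, mem_of_mem_inter_left he.2⟩
  rw [sum_deg_eq ends D U, sum_deg_eq ends D (U ∩ W)] at hsum
  omega

theorem card_cut_biUnion_le_sum_deg {ι : Type} {C D : Finset E}
    (hslack : ∀ X : Finset V, (cut ends D X).card ≤ (cut ends C X).card)
    (U : ι → Finset V) (s : Finset ι)
    (htight : ∀ i ∈ s, (cut ends C (U i)).card ≤ (cut ends D (U i)).card) :
    (cut ends C (s.biUnion U)).card ≤ ∑ w ∈ s.biUnion U, deg ends D w := by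
  classical
  induction s using Finset.induction_on with
  | empty => simp [cut]
  | insert i s _ ih =>
    rw [biUnion_insert]
    exact card_cut_union_le_sum_deg ends (ih fun j hj => htight j (mem_insert_of_mem hj))
      (htight i (mem_insert_self i s)) (hslack _)

theorem deg_le_card_cut {S : Finset E} {W : Finset V} {v : V} (hv : v ∉ W)
    (hW : ∀ w, adjOn ends S v w → w ∈ W) : deg ends S v ≤ (cut ends S W).card := by
  simp only [deg, cut, card_filter, ← sum_add_distrib]
  refine sum_le_sum fun e he => ?_
  have h1 : (ends e).1 = v → (ends e).2 ∈ W := fun h => hW _ ⟨e, he, Or.inl (by rw [← h])⟩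
  have h2 : (ends e).2 = v → (ends e).1 ∈ W := fun h => hW _ ⟨e, he, Or.inr (by rw [← h])⟩
  split_ifs <;> simp_all

theorem exists_tight_separating [Fintype V] {H : Finset E} {X Y : Finset V} {e : E} {v w : V}
    (hXY : (bad ends H X).card ≤ (bad ends H Y).card) (heX : e ∈ bad ends H X)
    (heY : e ∈ cut ends H Y) (hends : ends e = (v, w) ∨ ends e = (w, v)) :
    ∃ U : Finset V, v ∉ U ∧ w ∈ U ∧
      (cut ends (cut ends H Y) U).card ≤ (cut ends (bad ends H Y) U).card := by
  have htight := card_bad_add_card_cut_symmDiff ends H X Y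
  have hcross : ¬(v ∈ symmDiff X Y ↔ w ∈ symmDiff X Y) := by
    simp only [bad, cut, mem_filter] at heX heY
    rcases hends with h | h <;> rw [h] at heX heY <;> simp only [mem_symmDiff] <;> tauto
  by_cases hw : w ∈ symmDiff X Y
  · exact ⟨symmDiff X Y, by tauto, hw, by omega⟩
  · refine ⟨(symmDiff X Y)ᶜ, by simp only [mem_compl]; tauto, mem_compl.2 hw, ?_⟩
    rw [cut_compl, cut_compl]
    omega

theorem deg_le_two_mul_of_critical [Fintype V] {H : Finset E} {m : ℕ}
    (hmin : ∀ X, m ≤ (bad ends H X).card)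
    (hcrit : ∀ e ∈ H, ∃ X, e ∈ bad ends H X ∧ (bad ends H X).card ≤ m) (v : V) :
    deg ends H v ≤ 2 * m := by
  classical
  rcases H.eq_empty_or_nonempty with rfl | ⟨e₀, he₀⟩
  · simp [deg]
  obtain ⟨Y, -, hY⟩ := hcrit e₀ he₀
  set D := bad ends H Y
  set C := cut ends H Y
  have hD : D.card = m := le_antisymm hY (hmin Y)
  have hslack (U : Finset V) : (cut ends D U).card ≤ (cut ends C U).card := by
    have hswitch : (bad ends H (symmDiff U Y)).card + (cut ends D U).card =
        D.card + (cut ends C U).card := by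
      simpa using card_bad_add_card_cut_symmDiff ends H (symmDiff U Y) Y
    have := hmin (symmDiff U Y)
    omega
  have htight (w : V) (hw : adjOn ends C v w) : ∃ U : Finset V, v ∉ U ∧ w ∈ U ∧
      (cut ends C U).card ≤ (cut ends D U).card := by
    obtain ⟨e, heG, hends⟩ := hw
    obtain ⟨X, heX, hX⟩ := hcrit e (filter_subset _ _ heG)
    exact exists_tight_separating ends (hX.trans hD.ge) heX heG hends
  choose! U hvU hwU hU using htight
  set N := univ.filter (adjOn ends C v)
  set W := N.biUnion U
  have hvW : v ∉ W := by simp only [W, N, mem_biUnion, mem_filter]; grind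
  have hC : deg ends C v ≤ (cut ends C W).card :=
    deg_le_card_cut ends hvW fun w hw => mem_biUnion.2 ⟨w, by simpa [N] using hw, hwU w hw⟩
  have hW : (cut ends C W).card ≤ ∑ w ∈ W, deg ends D w :=
    card_cut_biUnion_le_sum_deg ends hslack U N fun w hw => hU w (by simpa [N] using hw)
  have hsum : ∑ w ∈ W, deg ends D w + deg ends D v ≤ 2 * D.card := by
    rw [← sum_deg_univ ends D, add_comm, ← sum_insert hvW]
    exact sum_le_sum_of_subset (subset_univ _)
  have hsplit : deg ends D v + deg ends C v = deg ends H v := deg_bad_add_deg_cut ends H Y v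
  omega

theorem exists_critical_subset [DecidableEq E] {S : Finset E} {k : ℕ}
    (hS : ∀ X : Finset V, k ≤ (bad ends S X).card) :
    ∃ H ⊆ S, (∀ X, k ≤ (bad ends H X).card) ∧
      ∀ e ∈ H, ∃ X, e ∈ bad ends H X ∧ (bad ends H X).card ≤ k := by
  classical
  obtain ⟨H, hHS, hH⟩ :=
    exists_min_image (S.powerset.filter fun H => ∀ X, k ≤ (bad ends H X).card) card
      ⟨S, mem_filter.2 ⟨mem_powerset_self S, hS⟩⟩
  rw [mem_filter, mem_powerset] at hHS
  refine ⟨H, hHS.1, hHS.2, fun e he => ?_⟩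
  obtain ⟨X, hX⟩ : ∃ X, (bad ends (H.erase e) X).card < k := by
    by_contra! h
    exact (card_erase_lt_of_mem he).not_ge
      (hH _ (mem_filter.2 ⟨mem_powerset.2 ((erase_subset e H).trans hHS.1), h⟩))
  have herase : bad ends (H.erase e) X = (bad ends H X).erase e := filter_erase _ _ _
  have heX : e ∈ bad ends H X := by
    by_contra h
    rw [herase, erase_eq_of_notMem h] at hX
    exact hX.not_ge (hHS.2 X)
  refine ⟨X, heX, ?_⟩
  rw [herase, card_erase_of_mem heX] at hX
  omega

theorem le_biIndexOn_iff [Fintype V] {S : Finset E} {k : ℕ} :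
    k ≤ biIndexOn ends S ↔ ∀ X : Finset V, k ≤ (bad ends S X).card := by
  simp [biIndexOn, le_inf'_iff]

end MG

open MG Finset

theorem stmt12_general {V E : Type} [Fintype V] [Fintype E] [DecidableEq V] [DecidableEq E]
    (ends : E → V × V) (k : ℕ)
    (hbi : k ≤ biIndexOn ends Finset.univ) :
    ∃ H : Finset E, (∀ v : V, deg ends H v ≤ 2 * k) ∧ k ≤ biIndexOn ends H := by
  obtain ⟨H, -, hmin, hcrit⟩ := exists_critical_subset ends ((le_biIndexOn_iff ends).1 hbi)
  exact ⟨H, deg_le_two_mul_of_critical ends hmin hcrit, (le_biIndexOn_iff ends).2 hmin⟩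

theorem stmt12 {V E : Type} [Fintype V] [Fintype E] [DecidableEq V] [DecidableEq E]
    (ends : E → V × V) (k : ℕ)
    (htc : TreeConnOn ends (2 * k) Finset.univ)
    (hbi : k ≤ biIndexOn ends Finset.univ) :
    ∃ H : Finset E, (∀ v : V, deg ends H v ≤ 2 * k) ∧ k ≤ biIndexOn ends H :=
  stmt12_general ends k hbi
end

section
/- Every 4k-tree-connected multigraph G with bi(G) ≥ k has k pairwise edge-disjoint spanning connected subgraphs, each with all vertex degrees even and with an odd number of edges. -/
namespace MG

open Finset Function
open scoped symmDiff

theorem sum_symmDiff_of_charTwo {α R : Type*} [DecidableEq α] [CommRing R] [CharP R 2]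
    (A B : Finset α) (f : α → R) : ∑ x ∈ A ∆ B, f x = ∑ x ∈ A, f x + ∑ x ∈ B, f x := by
  rw [symmDiff_def, sup_eq_union, sum_union disjoint_sdiff_sdiff,
    ← sum_inter_add_sum_sdiff A B, ← sum_inter_add_sum_sdiff B A, inter_comm B A]
  linear_combination (-1 : R) * CharTwo.add_self_eq_zero (∑ x ∈ A ∩ B, f x)

theorem cast_card_symmDiff {α : Type*} [DecidableEq α] (A B : Finset α) :
    (#(A ∆ B) : ZMod 2) = #A + #B := by
  simpa only [cast_card] using sum_symmDiff_of_charTwo A B fun _ => (1 : ZMod 2)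

theorem exists_one_lt_card_inter {α : Type*} [DecidableEq α] {F : Finset α}
    {𝓗 : Finset (Finset α)} (hF : F ⊆ 𝓗.biUnion id) (hcard : #𝓗 < #F) :
    ∃ H ∈ 𝓗, 1 < #(F ∩ H) := by
  by_contra! h
  have hFsub : F ⊆ 𝓗.biUnion (F ∩ ·) := fun x hx => by
    obtain ⟨H, hH, hxH⟩ := mem_biUnion.1 (hF hx)
    exact mem_biUnion.2 ⟨H, hH, mem_inter.2 ⟨hx, hxH⟩⟩
  have := (card_le_card hFsub).trans (card_biUnion_le_card_mul _ _ 1 h)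
  omega

theorem card_filter_mem_le_one {ι α : Type*} [DecidableEq α] {T : ι → Finset α}
    (hT : Pairwise (Disjoint on T)) (M : Finset ι) (x : α) : #(M.filter (x ∈ T ·)) ≤ 1 :=
  card_le_one.2 fun _ ha _ hb => by
    by_contra hab
    exact disjoint_left.1 (hT hab) (mem_filter.1 ha).2 (mem_filter.1 hb).2

theorem ConnOn.mono {V E : Type} (ends : E → V × V) {S T : Finset E} (hST : S ⊆ T)
    (hS : ConnOn ends S) : ConnOn ends T :=
  fun a b => Relation.ReflTransGen.mono (fun _ _ ⟨e, he, h⟩ => ⟨e, hST he, h⟩) _ _ (hS a b)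

variable {V E : Type} [DecidableEq V] (ends : E → V × V)

def incVec (p : V × V) (v : V) : ZMod 2 :=
  (if p.1 = v then 1 else 0) + (if p.2 = v then 1 else 0)

theorem incVec_swap (p : V × V) : incVec p.swap = incVec p := by
  ext v; exact add_comm _ _

theorem incVec_self (a v : V) : incVec (a, a) v = 0 :=
  CharTwo.add_self_eq_zero _

theorem incVec_add_incVec (a b c v : V) :
    incVec (a, b) v + incVec (b, c) v = incVec (a, c) v := by
  simp only [incVec]
  generalize (if a = v then (1 : ZMod 2) else 0) = x
  generalize (if b = v then (1 : ZMod 2) else 0) = y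
  generalize (if c = v then (1 : ZMod 2) else 0) = z
  revert x y z; decide

theorem cast_deg (S : Finset E) (v : V) :
    (deg ends S v : ZMod 2) = ∑ e ∈ S, incVec (ends e) v := by
  simp only [deg, incVec, Nat.cast_add, natCast_card_filter, sum_add_distrib]

theorem cast_deg_singleton (e : E) (v : V) : (deg ends {e} v : ZMod 2) = incVec (ends e) v := by
  rw [cast_deg, sum_singleton]

theorem sum_cast_deg (S : Finset E) (X : Finset V) :
    ∑ v ∈ X, (deg ends S v : ZMod 2) = #(cut ends S X) := by
  rw [cut, natCast_card_filter]
  simp only [cast_deg, incVec]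
  rw [sum_comm]
  refine sum_congr rfl fun e _ => ?_
  rw [sum_add_distrib, sum_ite_eq, sum_ite_eq]
  have two : (1 + 1 : ZMod 2) = 0 := rfl
  by_cases h1 : (ends e).1 ∈ X <;> by_cases h2 : (ends e).2 ∈ X <;> simp [h1, h2, two]

def EvenDeg (S : Finset E) : Prop := ∀ v, (deg ends S v : ZMod 2) = 0

theorem EvenDeg.cast_card_eq {S : Finset E} (hS : EvenDeg ends S) (X : Finset V) :
    (#S : ZMod 2) = #(bad ends S X) := by
  have hcut : (#(cut ends S X) : ZMod 2) = 0 := by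
    rw [← sum_cast_deg]; exact sum_eq_zero fun v _ => hS v
  rw [← card_filter_add_card_filter_not (s := S) fun e => (ends e).1 ∈ X ↔ (ends e).2 ∈ X]
  push_cast
  rw [← cut, hcut, add_zero, bad]

def IsOddEulerian (H : Finset E) : Prop := ConnOn ends H ∧ EvenDeg ends H ∧ Odd #H

def IsPacking (𝓗 : Finset (Finset E)) : Prop :=
  (∀ H ∈ 𝓗, IsOddEulerian ends H) ∧ (𝓗 : Set (Finset E)).PairwiseDisjoint id

theorem IsPacking.subset {𝓗 𝓗' : Finset (Finset E)} (h : IsPacking ends 𝓗) (h' : 𝓗' ⊆ 𝓗) :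
    IsPacking ends 𝓗' :=
  ⟨fun H hH => h.1 H (h' hH), h.2.subset (coe_subset.2 h')⟩

variable [DecidableEq E]

theorem cast_deg_symmDiff (A B : Finset E) (v : V) :
    (deg ends (A ∆ B) v : ZMod 2) = deg ends A v + deg ends B v := by
  simp only [cast_deg, sum_symmDiff_of_charTwo]

theorem cast_deg_union {A B : Finset E} (h : Disjoint A B) (v : V) :
    (deg ends (A ∪ B) v : ZMod 2) = deg ends A v + deg ends B v := by
  simp only [cast_deg, sum_union h]

theorem exists_subset_cast_deg_eq_incVec {S : Finset E} {a b : V}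
    (h : Relation.ReflTransGen (adjOn ends S) a b) :
    ∃ P ⊆ S, ∀ v, (deg ends P v : ZMod 2) = incVec (a, b) v := by
  induction h with
  | refl => exact ⟨∅, empty_subset _, fun v => by rw [cast_deg, sum_empty, incVec_self]⟩
  | @tail b c _ hbc ih =>
    obtain ⟨P, hPS, hP⟩ := ih
    obtain ⟨e, heS, hends⟩ := hbc
    have he : incVec (ends e) = incVec (b, c) := by
      rcases hends with h | h
      · rw [h]
      · rw [h, ← incVec_swap]; rfl
    refine ⟨P ∆ {e}, symmDiff_subset_union.trans (union_subset hPS (by simpa)), fun v => ?_⟩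
    rw [cast_deg_symmDiff, hP, cast_deg_singleton, he, incVec_add_incVec]

/-- Existence of `T`-joins in a connected graph, for `T` the odd-degree vertices of `S`. -/
theorem ConnOn.exists_subset_cast_deg_eq {W : Finset E} (hW : ConnOn ends W) (S : Finset E) :
    ∃ J ⊆ W, ∀ v, (deg ends J v : ZMod 2) = deg ends S v := by
  induction S using Finset.induction_on with
  | empty => exact ⟨∅, empty_subset _, fun _ => rfl⟩
  | @insert e S he ih =>
    obtain ⟨J, hJW, hJ⟩ := ih
    obtain ⟨P, hPW, hP⟩ := exists_subset_cast_deg_eq_incVec ends (hW (ends e).1 (ends e).2)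
    refine ⟨J ∆ P, symmDiff_subset_union.trans (union_subset hJW hPW), fun v => ?_⟩
    rw [cast_deg_symmDiff, hJ, hP, cast_deg _ (insert e S), sum_insert he, ← cast_deg, add_comm]

/-- Colour each vertex by the parity of a fixed walk in `W` from a root to it. An edge whose ends
get the same colour closes an odd even subgraph with the two walks. -/
theorem ConnOn.exists_cut [Fintype V] {W : Finset E} (hW : ConnOn ends W) :
    ∃ X : Finset V, ∀ e, ((ends e).1 ∈ X ↔ (ends e).2 ∈ X) →
      ∃ z ⊆ insert e W, EvenDeg ends z ∧ Odd #z := by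
  rcases isEmpty_or_nonempty V with hV | ⟨⟨r⟩⟩
  · exact ⟨∅, fun e => isEmptyElim (ends e).1⟩
  choose P hPW hP using fun v => exists_subset_cast_deg_eq_incVec ends (hW r v)
  refine ⟨univ.filter fun v => (#(P v) : ZMod 2) = 1, fun e he => ?_⟩
  simp only [mem_filter, mem_univ, true_and] at he
  refine ⟨P (ends e).1 ∆ P (ends e).2 ∆ {e}, ?_, fun v => ?_, ?_⟩
  · refine symmDiff_subset_union.trans (union_subset ?_ (by simp))
    exact symmDiff_subset_union.trans ((union_subset (hPW _) (hPW _)).trans (subset_insert _ _))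
  · rw [cast_deg_symmDiff, cast_deg_symmDiff, hP, hP, cast_deg_singleton, add_right_comm,
      show ends e = ((ends e).1, (ends e).2) from rfl, incVec_add_incVec, CharTwo.add_self_eq_zero]
  · rw [← ZMod.natCast_eq_one_iff_odd, cast_card_symmDiff, cast_card_symmDiff, card_singleton,
      Nat.cast_one]
    generalize (#(P (ends e).1) : ZMod 2) = x at he
    generalize (#(P (ends e).2) : ZMod 2) = y at he
    revert x y; decide

/-- `J` is a `T`-join of `S` in `W`. As `W` crosses `X`, the edges of `S ∪ J` not crossing `X` are
those of `S`, which fixes the parity. -/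
theorem ConnOn.exists_evenDeg_union {W : Finset E} (hW : ConnOn ends W) {X : Finset V}
    (hWX : ∀ e ∈ W, ¬((ends e).1 ∈ X ↔ (ends e).2 ∈ X)) {S : Finset E}
    (hSX : ∀ e ∈ S, ((ends e).1 ∈ X ↔ (ends e).2 ∈ X)) :
    ∃ J ⊆ W, EvenDeg ends (S ∪ J) ∧ (#(S ∪ J) : ZMod 2) = #S := by
  obtain ⟨J, hJW, hJ⟩ := hW.exists_subset_cast_deg_eq ends S
  have hSJ : Disjoint S J := disjoint_left.2 fun e heS heJ => hWX e (hJW heJ) (hSX e heS)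
  have heven : EvenDeg ends (S ∪ J) := fun v => by
    rw [cast_deg_union ends hSJ, hJ, CharTwo.add_self_eq_zero]
  refine ⟨J, hJW, heven, ?_⟩
  rw [heven.cast_card_eq ends X]
  congr 2
  ext e
  simp only [bad, mem_filter, mem_union]
  exact ⟨fun h => h.1.resolve_right fun heJ => hWX e (hJW heJ) h.2, fun h => ⟨Or.inl h, hSX e h⟩⟩

/-- Complete `W₁` to an even subgraph by a `T`-join inside `W₂`, and correct the parity with `z`
if needed. -/
theorem exists_isOddEulerian_subset {W₁ W₂ z : Finset E} (h₁₂ : Disjoint W₁ W₂)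
    (hz₁ : Disjoint z W₁) (hW₁ : ConnOn ends W₁) (hW₂ : ConnOn ends W₂) (hz : EvenDeg ends z)
    (hzodd : Odd #z) : ∃ H ⊆ W₁ ∪ W₂ ∪ z, IsOddEulerian ends H := by
  obtain ⟨J, hJW, hJ⟩ := hW₂.exists_subset_cast_deg_eq ends W₁
  suffices ∃ K ⊆ W₂ ∪ z, Disjoint W₁ K ∧ (∀ v, (deg ends K v : ZMod 2) = deg ends W₁ v) ∧
      Odd #(W₁ ∪ K) by
    obtain ⟨K, hKsub, hK₁, hK, hodd⟩ := this
    refine ⟨W₁ ∪ K, ?_, hW₁.mono ends subset_union_left, fun v => ?_, hodd⟩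
    · rw [union_assoc]; exact union_subset_union_right hKsub
    · rw [cast_deg_union ends hK₁, hK, CharTwo.add_self_eq_zero]
  have hJ₁ : Disjoint W₁ J := h₁₂.mono_right hJW
  by_cases hodd : Odd #(W₁ ∪ J)
  · exact ⟨J, hJW.trans subset_union_left, hJ₁, hJ, hodd⟩
  have hJz₁ : Disjoint W₁ (J ∆ z) :=
    disjoint_of_subset_right symmDiff_subset_union (disjoint_union_right.2 ⟨hJ₁, hz₁.symm⟩)
  have hW₁J : (#W₁ : ZMod 2) + #J = 0 := by
    rw [← Nat.cast_add, ← card_union_of_disjoint hJ₁, ZMod.natCast_eq_zero_iff_even]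
    exact Nat.not_odd_iff_even.1 hodd
  refine ⟨J ∆ z, symmDiff_subset_union.trans (union_subset_union_left hJW), hJz₁,
    fun v => by rw [cast_deg_symmDiff, hJ, hz, add_zero], ?_⟩
  rw [← ZMod.natCast_eq_one_iff_odd, card_union_of_disjoint hJz₁, Nat.cast_add,
    cast_card_symmDiff, ← add_assoc, hW₁J, zero_add, ZMod.natCast_eq_one_iff_odd]
  exact hzodd

theorem exists_isOddEulerian_subset_insert {W₀ W₁ z : Finset E} {e : E} (h₀₁ : Disjoint W₀ W₁)
    (he : e ∉ W₁) (hW₀ : ConnOn ends W₀) (hW₁ : ConnOn ends W₁) (hzsub : z ⊆ insert e W₀)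
    (hz : EvenDeg ends z) (hzodd : Odd #z) : ∃ H ⊆ insert e (W₁ ∪ W₀), IsOddEulerian ends H := by
  have hz₁ : Disjoint z W₁ := disjoint_of_subset_left hzsub (disjoint_insert_left.2 ⟨he, h₀₁⟩)
  obtain ⟨H, hHsub, hH⟩ := exists_isOddEulerian_subset ends h₀₁.symm hz₁ hW₁ hW₀ hz hzodd
  refine ⟨H, hHsub.trans (union_subset (subset_insert _ _) (hzsub.trans ?_)), hH⟩
  exact insert_subset_insert _ subset_union_right

/-- Trading `g` and `g'` for a `T`-join of them in `W₃` keeps `H` even and odd, because `W₃`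
crosses `X`; then `W₂` restores connectivity. -/
theorem exists_isOddEulerian_subset_erase {H W₂ W₃ : Finset E} {X : Finset V} {g g' : E}
    (hH : EvenDeg ends H) (hHodd : Odd #H) (hg : g ∈ H) (hg' : g' ∈ H) (hgg' : g ≠ g')
    (hgX : (ends g).1 ∈ X ↔ (ends g).2 ∈ X) (hg'X : (ends g').1 ∈ X ↔ (ends g').2 ∈ X)
    (hW₂ : ConnOn ends W₂) (hW₃ : ConnOn ends W₃) (h₂₃ : Disjoint W₂ W₃) (hH₂ : Disjoint H W₂)
    (hW₃X : ∀ e ∈ W₃, ¬((ends e).1 ∈ X ↔ (ends e).2 ∈ X)) :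
    ∃ H' ⊆ W₂ ∪ W₃ ∪ H.erase g, IsOddEulerian ends H' := by
  obtain ⟨J, hJW, hy, hycard⟩ :=
    hW₃.exists_evenDeg_union ends hW₃X (S := {g, g'}) (by simp [hgX, hg'X])
  have hzsub : H ∆ ({g, g'} ∪ J) ⊆ W₃ ∪ H.erase g := by
    intro e he
    simp only [mem_symmDiff, mem_union, mem_insert, mem_singleton, mem_erase] at he ⊢
    grind
  have hz₂ : Disjoint (H ∆ ({g, g'} ∪ J)) W₂ :=
    disjoint_of_subset_left hzsub
      (disjoint_union_left.2 ⟨h₂₃.symm, disjoint_of_subset_left (erase_subset _ _) hH₂⟩)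
  have hzodd : Odd #(H ∆ ({g, g'} ∪ J)) := by
    rw [← ZMod.natCast_eq_one_iff_odd, cast_card_symmDiff, hycard, card_pair hgg',
      ZMod.natCast_eq_one_iff_odd.2 hHodd]
    rfl
  obtain ⟨H', hH'sub, hH'⟩ := exists_isOddEulerian_subset ends h₂₃ hz₂ hW₂ hW₃
    (fun v => by rw [cast_deg_symmDiff, hH, hy, add_zero]) hzodd
  refine ⟨H', hH'sub.trans ?_, hH'⟩
  rw [union_assoc, union_assoc]
  exact union_subset_union_right (union_subset subset_union_left hzsub)

theorem exists_isOddEulerian_pair {H : Finset E} (hH : EvenDeg ends H) (hHodd : Odd #H)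
    {g g' : E} (hg : g ∈ H) (hg' : g' ∈ H) (hgg' : g ≠ g') {X : Finset V}
    (hgX : (ends g).1 ∈ X ↔ (ends g).2 ∈ X) (hg'X : (ends g').1 ∈ X ↔ (ends g').2 ∈ X)
    {W : Fin 4 → Finset E} (hW : ∀ j, ConnOn ends (W j)) (hWd : Pairwise (Disjoint on W))
    (hWX : ∀ j, ∀ e ∈ W j, ¬((ends e).1 ∈ X ↔ (ends e).2 ∈ X)) (hWH : ∀ j, Disjoint (W j) H) :
    ∃ Ha Hb, IsOddEulerian ends Ha ∧ IsOddEulerian ends Hb ∧ Disjoint Ha Hb ∧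
      Ha ∪ Hb ⊆ H ∪ univ.biUnion W := by
  have hgW : ∀ j, g ∉ W j := fun j h => disjoint_left.1 (hWH j) h hg
  obtain ⟨J, hJ, hz, hzcard⟩ :=
    (hW 0).exists_evenDeg_union ends (hWX 0) (S := {g}) (by simpa using hgX)
  obtain ⟨Ha, hHasub, hHa⟩ := exists_isOddEulerian_subset_insert ends
    (hWd (by decide : (0 : Fin 4) ≠ 1)) (hgW 1) (hW _) (hW _) (by rw [← insert_eq]; exact insert_subset_insert _ hJ) hz
    (by rw [← ZMod.natCast_eq_one_iff_odd, hzcard, card_singleton, Nat.cast_one])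
  obtain ⟨Hb, hHbsub, hHb⟩ := exists_isOddEulerian_subset_erase ends hH hHodd hg hg' hgg' hgX
    hg'X (hW _) (hW _) (hWd (by decide : (2 : Fin 4) ≠ 3)) (hWH 2).symm (hWX 3)
  have hWsub : ∀ j, W j ⊆ H ∪ univ.biUnion W := fun j =>
    (subset_biUnion_of_mem W (mem_univ j)).trans subset_union_right
  refine ⟨Ha, Hb, hHa, hHb, disjoint_left.2 fun e hea heb => ?_, union_subset
    (hHasub.trans (insert_subset (mem_union_left _ hg) (union_subset (hWsub 1) (hWsub 0))))
    (hHbsub.trans (union_subset (union_subset (hWsub 2) (hWsub 3))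
      ((erase_subset _ _).trans subset_union_left)))⟩
  have h1 := hHasub hea
  have h2 := hHbsub heb
  simp only [mem_insert, mem_union, mem_erase] at h1 h2
  rcases h1 with rfl | h1 | h1 <;> rcases h2 with (h2 | h2) | ⟨h2, h2'⟩
  all_goals first
    | exact hgW _ h2 | exact h2 rfl
    | exact disjoint_left.1 (hWd (by decide)) h1 h2 | exact disjoint_left.1 (hWH _) h1 h2'

theorem IsPacking.insert_of_disjoint {𝓗 : Finset (Finset E)} (h𝓗 : IsPacking ends 𝓗) {H : Finset E}
    (hH : IsOddEulerian ends H) (hH𝓗 : ∀ K ∈ 𝓗, Disjoint H K) :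
    IsPacking ends (insert H 𝓗) ∧ #(insert H 𝓗) = #𝓗 + 1 := by
  have hnot : H ∉ 𝓗 := fun hmem => by
    have hempty := disjoint_self.1 (hH𝓗 H hmem)
    simpa [hempty] using hH.2.2
  refine ⟨⟨fun K hK => ?_, ?_⟩, card_insert_of_notMem hnot⟩
  · rcases mem_insert.1 hK with rfl | hK
    exacts [hH, h𝓗.1 K hK]
  · rw [coe_insert]
    exact h𝓗.2.insert fun K hK _ => hH𝓗 K hK

theorem IsPacking.exchange {𝓗 : Finset (Finset E)} (h𝓗 : IsPacking ends 𝓗)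
    {H Ha Hb : Finset E} (hH : H ∈ 𝓗) (hHa : IsOddEulerian ends Ha) (hHb : IsOddEulerian ends Hb)
    (hab : Disjoint Ha Hb) (hK : ∀ K ∈ 𝓗, K ≠ H → Disjoint (Ha ∪ Hb) K) :
    IsPacking ends (insert Ha (insert Hb (𝓗.erase H))) ∧
      #(insert Ha (insert Hb (𝓗.erase H))) = #𝓗 + 1 := by
  have hK' : ∀ K ∈ 𝓗.erase H, Disjoint (Ha ∪ Hb) K := fun K hK' =>
    hK K (mem_of_mem_erase hK') (ne_of_mem_erase hK')
  obtain ⟨hb, hbcard⟩ := (h𝓗.subset ends (erase_subset H 𝓗)).insert_of_disjoint ends hHb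
    fun K hK => (disjoint_union_left.1 (hK' K hK)).2
  obtain ⟨ha, hacard⟩ := hb.insert_of_disjoint ends hHa
    ((forall_mem_insert _ _ _).2 ⟨hab, fun K hK => (disjoint_union_left.1 (hK' K hK)).1⟩)
  exact ⟨ha, by rw [hacard, hbcard, card_erase_add_one hH]⟩

variable {ι : Type*} [DecidableEq ι] {T : ι → Finset E}

theorem exists_isPacking_succ_of_odd_evenDeg (hT : ∀ m, ConnOn ends (T m))
    (hTd : Pairwise (Disjoint on T)) {𝓗 : Finset (Finset E)} (h𝓗 : IsPacking ends 𝓗)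
    {M : Finset ι} (hM : ∀ m ∈ M, ∀ H ∈ 𝓗, Disjoint (T m) H) (t : Fin 4 ↪ ι) (ht : ∀ j, t j ∈ M)
    {e : E} (he : ∀ H ∈ 𝓗, e ∉ H) {z : Finset E} (hzsub : z ⊆ insert e (T (t 0)))
    (hz : EvenDeg ends z) (hzodd : Odd #z) :
    ∃ 𝓗' M', IsPacking ends 𝓗' ∧ #𝓗' = #𝓗 + 1 ∧ #M ≤ #M' + 4 ∧
      ∀ m ∈ M', ∀ H ∈ 𝓗', Disjoint (T m) H := by
  have hd : ∀ i j, i ≠ j → Disjoint (T (t i)) (T (t j)) := fun i j h => hTd (t.injective.ne h)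
  obtain ⟨j, hj0, hej⟩ : ∃ j, j ≠ 0 ∧ e ∉ T (t j) := by
    by_cases h : e ∈ T (t 1)
    · exact ⟨2, by decide, fun h' => disjoint_left.1 (hd 1 2 (by decide)) h h'⟩
    · exact ⟨1, by decide, h⟩
  obtain ⟨H, hHsub, hH⟩ :=
    exists_isOddEulerian_subset_insert ends (hd 0 j hj0.symm) hej (hT _) (hT _) hzsub hz hzodd
  have hH𝓗 : ∀ K ∈ 𝓗, Disjoint H K := fun K hK => disjoint_of_subset_left hHsub
    (disjoint_insert_left.2 ⟨he K hK, disjoint_union_left.2 ⟨hM _ (ht j) K hK, hM _ (ht 0) K hK⟩⟩)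
  obtain ⟨h𝓗', hcard⟩ := h𝓗.insert_of_disjoint ends hH hH𝓗
  refine ⟨_, ((M.erase (t 0)).erase (t j)).filter (e ∉ T ·), h𝓗', hcard, ?_, fun i hi => ?_⟩
  · have h₁ := card_filter_add_card_filter_not (s := (M.erase (t 0)).erase (t j)) (e ∈ T ·)
    have h₂ := card_filter_mem_le_one hTd ((M.erase (t 0)).erase (t j)) e
    have h₃ := (M.erase (t 0)).pred_card_le_card_erase (a := t j)
    have h₄ := M.pred_card_le_card_erase (a := t 0)
    omega
  · simp only [mem_filter, mem_erase] at hi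
    refine (forall_mem_insert _ _ _).2 ⟨disjoint_of_subset_right hHsub ?_, hM i hi.1.2.2⟩
    exact disjoint_insert_right.2 ⟨hi.2, disjoint_union_right.2 ⟨hTd hi.1.1, hTd hi.1.2.1⟩⟩

theorem exists_isPacking_succ_of_crossing [Fintype E] (hT : ∀ m, ConnOn ends (T m))
    (hTd : Pairwise (Disjoint on T)) {𝓗 : Finset (Finset E)} (h𝓗 : IsPacking ends 𝓗)
    {M : Finset ι} (hM : ∀ m ∈ M, ∀ H ∈ 𝓗, Disjoint (T m) H) (t : Fin 4 ↪ ι) (ht : ∀ j, t j ∈ M)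
    {X : Finset V} (hX : ∀ e, (∀ H ∈ 𝓗, e ∉ H) → ¬((ends e).1 ∈ X ↔ (ends e).2 ∈ X))
    (hbad : #𝓗 < #(bad ends univ X)) :
    ∃ 𝓗' M', IsPacking ends 𝓗' ∧ #𝓗' = #𝓗 + 1 ∧ #M ≤ #M' + 4 ∧
      ∀ m ∈ M', ∀ H ∈ 𝓗', Disjoint (T m) H := by
  obtain ⟨H, hH𝓗, hFH⟩ := exists_one_lt_card_inter (𝓗 := 𝓗) (fun e he => by
    by_contra hU
    exact hX e (fun H hH h => hU (mem_biUnion.2 ⟨H, hH, h⟩)) (mem_filter.1 he).2) hbad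
  obtain ⟨g, hg, g', hg', hgg'⟩ := one_lt_card.1 hFH
  simp only [bad, mem_inter, mem_filter, mem_univ, true_and] at hg hg'
  obtain ⟨Ha, Hb, hHa, hHb, hab, hsub⟩ := exists_isOddEulerian_pair ends (h𝓗.1 H hH𝓗).2.1
    (h𝓗.1 H hH𝓗).2.2 hg.2 hg'.2 hgg' hg.1 hg'.1 (fun j => hT (t j))
    (fun i j h => hTd (t.injective.ne h))
    (fun j e he => hX e fun K hK => disjoint_left.1 (hM _ (ht j) K hK) he)
    (fun j => hM _ (ht j) H hH𝓗)
  have hfar : ∀ K, Disjoint K H → (∀ j, Disjoint K (T (t j))) → Disjoint K (Ha ∪ Hb) :=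
    fun K hKH hKT => disjoint_of_subset_right hsub (disjoint_union_right.2
      ⟨hKH, (disjoint_biUnion_right _ _ _).2 fun j _ => hKT j⟩)
  obtain ⟨h𝓗', hcard⟩ := h𝓗.exchange ends hH𝓗 hHa hHb hab fun K hK hKH =>
    (hfar K (h𝓗.2 hK hH𝓗 hKH) fun j => (hM _ (ht j) K hK).symm).symm
  refine ⟨_, M \ univ.map t, h𝓗', hcard, ?_, fun n hn => ?_⟩
  · have := le_card_sdiff (univ.map t) M
    rw [card_map, card_univ, Fintype.card_fin] at this
    omega
  · simp only [mem_sdiff, mem_map, mem_univ, true_and, not_exists] at hn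
    have hnHab := hfar (T n) (hM n hn.1 H hH𝓗) fun j => hTd fun h => hn.2 j h.symm
    rw [disjoint_union_right] at hnHab
    refine (forall_mem_insert _ _ _).2 ⟨hnHab.1, (forall_mem_insert _ _ _).2 ⟨hnHab.2,
      fun K hK => hM n hn.1 K (mem_of_mem_erase hK)⟩⟩

theorem exists_isPacking_succ [Fintype V] [Fintype E] (hT : ∀ m, ConnOn ends (T m))
    (hTd : Pairwise (Disjoint on T)) {𝓗 : Finset (Finset E)} (h𝓗 : IsPacking ends 𝓗)
    {M : Finset ι} (hM : ∀ m ∈ M, ∀ H ∈ 𝓗, Disjoint (T m) H) (hM4 : 4 ≤ #M)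
    (hbad : ∀ X : Finset V, #𝓗 < #(bad ends univ X)) :
    ∃ 𝓗' M', IsPacking ends 𝓗' ∧ #𝓗' = #𝓗 + 1 ∧ #M ≤ #M' + 4 ∧
      ∀ m ∈ M', ∀ H ∈ 𝓗', Disjoint (T m) H := by
  let t : Fin 4 ↪ ι :=
    (Fin.castLEEmb hM4).trans (M.equivFin.symm.toEmbedding.trans (Embedding.subtype _))
  have ht : ∀ j, t j ∈ M := fun j => (M.equivFin.symm _).2
  obtain ⟨X, hX⟩ := (hT (t 0)).exists_cut ends
  by_cases h : ∃ e, (∀ H ∈ 𝓗, e ∉ H) ∧ ((ends e).1 ∈ X ↔ (ends e).2 ∈ X)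
  · obtain ⟨e, he, heX⟩ := h
    obtain ⟨z, hzsub, hz, hzodd⟩ := hX e heX
    exact exists_isPacking_succ_of_odd_evenDeg ends hT hTd h𝓗 hM t ht he hzsub hz hzodd
  · exact exists_isPacking_succ_of_crossing ends hT hTd h𝓗 hM t ht
      (fun e he heX => h ⟨e, he, heX⟩) (hbad X)

theorem exists_isPacking_card_eq [Fintype V] [Fintype E] (hT : ∀ m, ConnOn ends (T m))
    (hTd : Pairwise (Disjoint on T)) (n : ℕ) {𝓗 : Finset (Finset E)} (h𝓗 : IsPacking ends 𝓗)
    {M : Finset ι} (hM : ∀ m ∈ M, ∀ H ∈ 𝓗, Disjoint (T m) H) (hMn : 4 * n ≤ #M)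
    (hbad : ∀ X : Finset V, #𝓗 + n ≤ #(bad ends univ X)) :
    ∃ 𝓗' : Finset (Finset E), IsPacking ends 𝓗' ∧ #𝓗' = #𝓗 + n := by
  induction n generalizing 𝓗 M with
  | zero => exact ⟨𝓗, h𝓗, rfl⟩
  | succ n ih =>
    obtain ⟨𝓗', M', h𝓗', hcard, hMM', hM'⟩ :=
      exists_isPacking_succ ends hT hTd h𝓗 hM (by omega) fun X => by have := hbad X; omega
    obtain ⟨𝓗'', h𝓗'', hcard'⟩ := ih h𝓗' hM' (by omega) fun X => by have := hbad X; omega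
    exact ⟨𝓗'', h𝓗'', by omega⟩

end MG

open MG Finset

theorem stmt13_general {V E : Type} [Fintype V] [Fintype E] [DecidableEq V]
    (ends : E → V × V) (k : ℕ)
    (htc : TreeConnOn ends (4 * k) Finset.univ)
    (hbi : k ≤ biIndexOn ends Finset.univ) :
    ∃ G : Fin k → Finset E,
      (∀ i j, i ≠ j → Disjoint (G i) (G j)) ∧
      ∀ i, ConnOn ends (G i) ∧ (∀ v : V, Even (deg ends (G i) v)) ∧ Odd (G i).card := by
  classical
  obtain ⟨T, hT, hTd⟩ := htc
  obtain ⟨𝓗, h𝓗, hcard⟩ := exists_isPacking_card_eq ends (fun m => (hT m).2.1)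
    (fun i j => hTd i j) k (𝓗 := ∅) ⟨by simp, by simp⟩ (M := univ) (by simp) (by simp)
    fun X => by simpa using hbi.trans (inf'_le _ (mem_univ X))
  let e := (𝓗.equivFinOfCardEq (by simpa using hcard)).symm
  refine ⟨fun i => e i, fun i j hij => h𝓗.2 (e i).2 (e j).2 fun h => hij ?_, fun i => ?_⟩
  · exact e.injective (Subtype.ext h)
  · obtain ⟨hconn, heven, hodd⟩ := h𝓗.1 _ (e i).2
    exact ⟨hconn, fun v => ZMod.natCast_eq_zero_iff_even.1 (heven v), hodd⟩

theorem stmt13 {V E : Type} [Fintype V] [Fintype E] [DecidableEq V] [DecidableEq E]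
    (ends : E → V × V) (k : ℕ)
    (htc : TreeConnOn ends (4 * k) Finset.univ)
    (hbi : k ≤ biIndexOn ends Finset.univ) :
    ∃ G : Fin k → Finset E,
      (∀ i j, i ≠ j → Disjoint (G i) (G j)) ∧
      ∀ i, ConnOn ends (G i) ∧ (∀ v : V, Even (deg ends (G i) v)) ∧ Odd (G i).card :=
  stmt13_general ends k htc hbi
end
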